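/- arXiv:1804.04652 — 8 statements merged into one kernel-verified Lean document; each statement's English description precedes it below -/
import Mathlib

section
/- Let H be a Lie subalgebra of finite codimension of sl₂(K[λ]). Then every solvable ideal of the Lie algebra H is zero. -/
/-!
A nonzero solvable ideal of `H` contains a nonzero abelian ideal `J` of `H`. For `0 ≠ x ∈ J`,
`ad x ^ 2` vanishes on `H`, because `⁅x, h⁆ ∈ J`. On the other hand, for a nonzero traceless
`2 × 2` matrix `x` over `K[λ]` there is a traceless `y` with `⁅x, ⁅x, y⁆⁆ ≠ 0`, and since `ad x` is
`K[λ]`-linear, `⁅x, ⁅x, p • y⁆⁆ = p • ⁅x, ⁅x, y⁆⁆ ≠ 0` for every `p ≠ 0`. As `K[λ]` is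
infinite-dimensional and `H` has finite codimension, some `p • y` with `p ≠ 0` lies in `H`.
-/

attribute [local instance 100] LieRing.ofAssociativeRing

/-- The Lie algebra `sl₂(K[λ])` of traceless `2×2` matrices over the polynomial ring `K[λ]`,
regarded as a Lie algebra over `K`. -/
def sl2Poly (K : Type*) [Field K] :
    LieSubalgebra K (Matrix (Fin 2) (Fin 2) (Polynomial K)) where
  carrier := {A | Matrix.trace A = 0}
  add_mem' := fun {a b} ha hb => by
    simp only [Set.mem_setOf_eq, Matrix.trace_add] at *
    rw [ha, hb, add_zero]
  zero_mem' := by simp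
  smul_mem' := fun c a ha => by
    simp only [Set.mem_setOf_eq, Matrix.trace_smul] at *
    rw [ha, smul_zero]
  lie_mem' := fun {a b} _ _ => by
    show Matrix.trace ⁅a, b⁆ = 0
    rw [Ring.lie_def, Matrix.trace_sub, Matrix.trace_mul_comm, sub_self]

theorem LieIdeal.lie_lie_eq_zero_of_isLieAbelian {R L : Type*} [CommRing R] [LieRing L]
    [LieAlgebra R L] (J : LieIdeal R L) [IsLieAbelian J] {x : L} (hx : x ∈ J) (y : L) :
    ⁅x, ⁅x, y⁆⁆ = 0 :=
  (LieSubmodule.lie_eq_bot_iff J J).mp ((LieSubmodule.lie_abelian_iff_lie_self_eq_bot J).mp ‹_›)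
    x hx _ (lie_mem_left R L J x y hx)

theorem Submodule.exists_ne_zero_map_mem_of_finite_quotient {R A V : Type*} [CommRing R]
    [IsNoetherianRing R] [AddCommGroup A] [Module R A] [AddCommGroup V] [Module R V]
    (N : Submodule R V) [Module.Finite R (V ⧸ N)] (hA : ¬ Module.Finite R A) (f : A →ₗ[R] V) :
    ∃ a ≠ 0, f a ∈ N := by
  by_contra! h
  refine hA (Module.Finite.of_injective (N.mkQ ∘ₗ f) ?_)
  rw [injective_iff_map_eq_zero]
  intro a ha
  by_contra ha0
  exact h a ha0 ((Submodule.Quotient.mk_eq_zero N).mp ha)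

theorem Matrix.exists_lie_lie_ne_zero_of_trace_eq_zero {R : Type*} [CommRing R]
    [NoZeroDivisors R] [NeZero (2 : R)] {X : Matrix (Fin 2) (Fin 2) R} (htr : X.trace = 0)
    (hX : X ≠ 0) : ∃ Y : Matrix (Fin 2) (Fin 2) R, Y.trace = 0 ∧ ⁅X, ⁅X, Y⁆⁆ ≠ 0 := by
  by_contra! h
  obtain ⟨a, b, c, d, rfl⟩ : ∃ a b c d, X = !![a, b; c, d] := ⟨_, _, _, _, X.eta_fin_two⟩
  have hE := h !![0, 1; 0, 0] (by simp [trace_fin_two])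
  have hF := h !![0, 0; 1, 0] (by simp [trace_fin_two])
  simp only [trace_fin_two, Fin.isValue, of_apply, cons_val', cons_val_zero, cons_val_fin_one,
    cons_val_one, Ring.lie_def, cons_mul, Nat.succ_eq_add_one, Nat.reduceAdd, vecMul_cons,
    head_cons, smul_cons, smul_eq_mul, mul_zero, mul_one, smul_empty, tail_cons, empty_vecMul,
    add_zero, add_cons, empty_add_empty, empty_mul, Equiv.symm_apply_apply, zero_smul, one_smul,
    zero_add, of_sub_of, sub_cons, zero_sub, sub_self, zero_empty, sub_zero, mul_neg, neg_smul,
    neg_cons, neg_empty, ← ext_iff, zero_apply, Fin.forall_fin_two, ne_eq, not_and,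
    and_imp] at htr hE hF hX
  obtain rfl : d = -a := by linear_combination htr
  obtain rfl : c = 0 := by
    simpa [two_ne_zero] using (by linear_combination -hE.2.1 : (2 : R) * (c * c) = 0)
  obtain rfl : b = 0 := by
    simpa [two_ne_zero] using (by linear_combination -hF.1.2 : (2 : R) * (b * b) = 0)
  obtain rfl : a = 0 := by
    simpa [two_ne_zero] using (by linear_combination hE.1.2 : (2 : R) * (2 * (a * a)) = 0)
  simp at hX

theorem sl2Poly.hasTrivialRadical_of_finiteDimensional_quotient {K : Type*} [Field K]
    [CharZero K] (H : LieSubalgebra K (sl2Poly K))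
    [FiniteDimensional K (sl2Poly K ⧸ H.toSubmodule)] : LieAlgebra.HasTrivialRadical K H := by
  rw [LieAlgebra.hasTrivialRadical_iff_no_abelian_ideals]
  intro J hJ
  by_contra hJ0
  obtain ⟨x, hxJ, hx0⟩ := (Submodule.ne_bot_iff J.toSubmodule).mp (by simpa using hJ0)
  set A : Matrix (Fin 2) (Fin 2) (Polynomial K) := (x : sl2Poly K).val
  have hA0 : A ≠ 0 := by simpa [A] using hx0
  obtain ⟨Y, hYtr, hAY⟩ := Matrix.exists_lie_lie_ne_zero_of_trace_eq_zero (x : sl2Poly K).2 hA0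
  let f : Polynomial K →ₗ[K] sl2Poly K :=
    LinearMap.codRestrict (sl2Poly K).toSubmodule
      ((LinearMap.toSpanSingleton (Polynomial K) _ Y).restrictScalars K)
      (fun p => show (p • Y).trace = 0 by rw [Matrix.trace_smul, hYtr, smul_zero])
  obtain ⟨p, hp0, hpH⟩ :=
    H.toSubmodule.exists_ne_zero_map_mem_of_finite_quotient Polynomial.not_finite f
  have hApY : ⁅A, ⁅A, p • Y⁆⁆ = 0 := congrArg (fun z : H => (z : sl2Poly K).val)
    (J.lie_lie_eq_zero_of_isLieAbelian hxJ ⟨f p, hpH⟩)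
  rw [lie_smul, lie_smul] at hApY
  exact smul_ne_zero hp0 hAY hApY

/-- If `H` is a Lie subalgebra of finite codimension of `sl₂(K[λ])`
(`K = ℝ` or `ℂ`), then every solvable ideal of `H` is zero. -/
theorem stmt_0 {K : Type*} [RCLike K]
    (H : LieSubalgebra K (sl2Poly K))
    (hcodim : FiniteDimensional K ((sl2Poly K) ⧸ H.toSubmodule))
    (I : LieIdeal K H) (hI : LieAlgebra.IsSolvable I) :
    I = ⊥ :=
  (sl2Poly.hasTrivialRadical_of_finiteDimensional_quotient H).eq_bot_of_isSolvable I
end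

section
/- Suppose α = 0 and β ≠ 0. Then the presented Lie algebra 𝔥(0,β) is a nilpotent Lie algebra of dimension at most 6. -/
noncomputable section

variable (K : Type*) [Field K] [CharZero K]

/-- Generators of the free Lie algebra on three generators `A₀, A₁, Y`. -/
def genA₀ : FreeLieAlgebra K (Fin 3) := FreeLieAlgebra.of K 0
def genA₁ : FreeLieAlgebra K (Fin 3) := FreeLieAlgebra.of K 1
def genY : FreeLieAlgebra K (Fin 3) := FreeLieAlgebra.of K 2

variable (α β : K)

/-- The left-hand sides of the relations (R1)–(R6). -/
def weRelations : Set (FreeLieAlgebra K (Fin 3)) :=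
  { ⁅genA₁ K, ⁅genA₁ K, ⁅genA₀ K, genA₁ K⁆⁆⁆,
    (4 * α) • ⁅genA₀ K, genA₁ K⁆ + ⁅genA₀ K, ⁅genA₁ K, ⁅genA₀ K, genA₁ K⁆⁆⁆,
    ⁅genA₁ K, ⁅genA₁ K, ⁅genA₀ K, ⁅genA₀ K, ⁅genA₀ K, genA₁ K⁆⁆⁆⁆⁆,
    ⁅genA₁ K, ⁅genA₀ K, ⁅genA₀ K, ⁅genA₀ K, ⁅genA₀ K, genA₁ K⁆⁆⁆⁆⁆
      - β • ⁅genA₀ K, ⁅genA₀ K, ⁅genA₀ K, genA₁ K⁆⁆⁆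
      + ((1 : K) / 2) • ⁅genA₀ K, ⁅genA₁ K, ⁅genA₀ K, ⁅genA₀ K, ⁅genA₀ K, genA₁ K⁆⁆⁆⁆⁆,
    ⁅genA₁ K, genY K⁆ + ⁅genA₀ K, ⁅genA₀ K, ⁅genA₀ K, ⁅genA₀ K, ⁅genA₀ K, genA₁ K⁆⁆⁆⁆⁆,
    ⁅genA₀ K, genY K⁆ }

/-- The Lie ideal of the free Lie algebra generated by the relations (R1)–(R6). -/
def weIdeal : LieIdeal K (FreeLieAlgebra K (Fin 3)) :=
  LieSubmodule.lieSpan K (FreeLieAlgebra K (Fin 3)) (weRelations K α β)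

/-- The Wahlquist–Estabrook prolongation algebra `𝔥(α,β)`, presented by generators
`A₀, A₁, Y` and relations (R1)–(R6). -/
abbrev WEAlgebra := FreeLieAlgebra K (Fin 3) ⧸ weIdeal K α β

/-!
Write `bₙ = (ad A₀)ⁿ A₁` and `c = ⁅A₁, b₁⁆`. For `α = 0`, relation (R2) says that `c` commutes
with `A₀`, hence with every `bₙ`, `n ≥ 2`, and the Jacobi identity turns (R1)–(R4) into a small
multiplication table: `⁅A₁, b₂⁆ = 0`, `⁅A₁, b₃⁆ = -⁅b₁, b₂⁆`, `⁅b₁, b₃⁆ = γ b₃` and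
`⁅A₁, b₄⁆ = -2γ b₃` with `γ = -2β/5`. Through (R5) and (R6), `Y` enters only via
`⁅A₁, Y⁆ = -b₅`, and expanding `⁅A₁, ⁅c, Y⁆⁆ = 0` gives `15γ (⁅b₂, b₃⁆ - γ b₄) = 0`.
For `β ≠ 0` this gives `⁅b₂, b₃⁆ = γ b₄`, hence `⁅b₁, b₄⁆ = 0`, and bracketing with `A₁` gives
`2γ² b₃ = 0`, so `b₃ = 0`.

Then `Y` commutes with `A₀` and `A₁`, hence is central, and
`span {A₀, A₁, Y, b₁, b₂, c} ⊇ span {b₁, b₂, c} ⊇ span {b₂, c} ⊇ 0` is a descending filtration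
shifted by `ad` of each generator. The `x` whose `ad x` shifts such a filtration form a Lie
subalgebra, so all of `𝔥(0,β)` shifts it: the first term is everything and bounds the dimension,
and the lower central series dies at step 3.
-/

theorem rank_le_card_of_span_range_eq_top {R M ι : Type*} [Ring R] [StrongRankCondition R]
    [AddCommGroup M] [Module R M] [Fintype ι] {v : ι → M}
    (hv : Submodule.span R (Set.range v) = ⊤) : Module.rank R M ≤ Fintype.card ι := by
  rw [← rank_top R, ← hv]
  refine (rank_span_le _).trans ?_
  simpa using Cardinal.mk_range_le_lift (f := v)

section Generators

variable {R L : Type*} [CommRing R] [LieRing L] [LieAlgebra R L]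

def LieIdeal.mkQ (I : LieIdeal R L) : L →ₗ⁅R⁆ L ⧸ I :=
  { I.toSubmodule.mkQ with map_lie' := rfl }

theorem FreeLieAlgebra.lieSpan_range_comp_of_eq_top {X : Type*}
    {f : FreeLieAlgebra R X →ₗ⁅R⁆ L} (hf : Function.Surjective f) :
    LieSubalgebra.lieSpan R L (Set.range (f ∘ FreeLieAlgebra.of R)) = ⊤ := by
  set H := LieSubalgebra.lieSpan R L (Set.range (f ∘ FreeLieAlgebra.of R))
  let g : FreeLieAlgebra R X →ₗ⁅R⁆ H :=
    FreeLieAlgebra.lift R fun i => ⟨f (.of R i), LieSubalgebra.subset_lieSpan ⟨i, rfl⟩⟩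
  have hg : H.incl.comp g = f := FreeLieAlgebra.hom_ext fun i => by simp [g]
  refine eq_top_iff.mpr fun x _ => ?_
  obtain ⟨w, rfl⟩ := hf x
  rw [← hg]
  exact (g w).2

theorem lie_mem_of_forall_mem_span {M : Type*} [AddCommGroup M] [Module R M] [LieRingModule L M]
    [LieModule R L M] {x : L} {s : Set M} {W : Submodule R M} (h : ∀ v ∈ s, ⁅x, v⁆ ∈ W) {v : M}
    (hv : v ∈ Submodule.span R s) : ⁅x, v⁆ ∈ W :=
  Submodule.span_le (p := W.comap (LieModule.toEnd R L M x)).mpr h hv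

variable {G : Set L} (hG : LieSubalgebra.lieSpan R L G = ⊤)
include hG

theorem lie_eq_zero_of_forall_lie_generator_eq_zero {z : L} (hz : ∀ g ∈ G, ⁅g, z⁆ = 0) (x : L) :
    ⁅x, z⁆ = 0 := by
  have hx : x ∈ LieSubalgebra.lieSpan R L G := hG ▸ LieSubalgebra.mem_top x
  induction hx using LieSubalgebra.lieSpan_induction with
  | mem g hg => exact hz g hg
  | zero => exact zero_lie z
  | add x y _ _ hx hy => rw [add_lie, hx, hy, add_zero]
  | smul t x _ hx => rw [smul_lie, hx, smul_zero]
  | lie x y _ _ hx hy => rw [lie_lie, hx, hy, lie_zero, lie_zero, sub_zero]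

variable {V : ℕ → Submodule R L} (hV : Antitone V)
  (hGV : ∀ g ∈ G, ∀ k, ∀ v ∈ V k, ⁅g, v⁆ ∈ V (k + 1))
include hV hGV

theorem lie_mem_succ_of_forall_generator (x : L) : ∀ k, ∀ v ∈ V k, ⁅x, v⁆ ∈ V (k + 1) := by
  have hx : x ∈ LieSubalgebra.lieSpan R L G := hG ▸ LieSubalgebra.mem_top x
  induction hx using LieSubalgebra.lieSpan_induction with
  | mem g hg => exact hGV g hg
  | zero => intro k v _; rw [zero_lie]; exact zero_mem _
  | add x y _ _ hx hy => intro k v hv; rw [add_lie]; exact add_mem (hx k v hv) (hy k v hv)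
  | smul t x _ hx => intro k v hv; rw [smul_lie]; exact Submodule.smul_mem _ t (hx k v hv)
  | lie x y _ _ hx hy =>
    intro k v hv
    rw [lie_lie]
    exact sub_mem (hV (Nat.le_succ _) (hx _ _ (hy k v hv)))
      (hV (Nat.le_succ _) (hy _ _ (hx k v hv)))

variable (hG₀ : G ⊆ V 0)
include hG₀

theorem eq_top_of_forall_generator : V 0 = ⊤ := by
  let V₀ : LieSubalgebra R L :=
    { V 0 with
      lie_mem' := fun {x y} _ hy =>
        hV (Nat.zero_le 1) (lie_mem_succ_of_forall_generator hG hV hGV x 0 y hy) }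
  have : (⊤ : LieSubalgebra R L) ≤ V₀ := hG ▸ LieSubalgebra.lieSpan_le.mpr hG₀
  exact eq_top_iff.mpr fun x _ => this (LieSubalgebra.mem_top x)

theorem lowerCentralSeries_le_of_forall_generator (k : ℕ) :
    (LieModule.lowerCentralSeries R L L k).toSubmodule ≤ V k := by
  induction k with
  | zero => simp [eq_top_of_forall_generator hG hV hGV hG₀]
  | succ k ih =>
    rw [LieModule.lowerCentralSeries_succ, LieSubmodule.lieIdeal_oper_eq_linear_span',
      Submodule.span_le]
    rintro _ ⟨x, -, v, hv, rfl⟩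
    exact lie_mem_succ_of_forall_generator hG hV hGV x k v (ih hv)

theorem isNilpotent_of_forall_generator {n : ℕ} (hn : V n = ⊥) : LieModule.IsNilpotent L L := by
  refine (LieModule.isNilpotent_iff R L L).mpr ⟨n, ?_⟩
  rw [← LieSubmodule.toSubmodule_eq_bot, eq_bot_iff, ← hn]
  exact lowerCentralSeries_le_of_forall_generator hG hV hGV hG₀ n

end Generators

namespace WEAlgebra

variable (K : Type*) [Field K] (α β : K)

def a₀ : WEAlgebra K α β := (weIdeal K α β).mkQ (genA₀ K)
def a₁ : WEAlgebra K α β := (weIdeal K α β).mkQ (genA₁ K)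
def y : WEAlgebra K α β := (weIdeal K α β).mkQ (genY K)

def b : ℕ → WEAlgebra K α β
  | 0 => a₁ K α β
  | n + 1 => ⁅a₀ K α β, b n⁆

def c : WEAlgebra K α β := ⁅a₁ K α β, b K α β 1⁆

def filtration : ℕ → Submodule K (WEAlgebra K α β)
  | 0 => Submodule.span K (Set.range ![a₀ K α β, a₁ K α β, y K α β, b K α β 1, b K α β 2, c K α β])
  | 1 => Submodule.span K (Set.range ![b K α β 1, b K α β 2, c K α β])
  | 2 => Submodule.span K (Set.range ![b K α β 2, c K α β])
  | _ => ⊥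

section Relations

variable {K α β}

local notation "A₀" => a₀ K α β
local notation "A₁" => a₁ K α β
local notation "Y" => y K α β
local notation "B" => b K α β
local notation "C" => c K α β

theorem lie_a₀_b (n : ℕ) : ⁅A₀, B n⁆ = B (n + 1) := rfl

theorem lie_a₀_a₁ : ⁅A₀, A₁⁆ = B 1 := rfl

theorem lie_a₁_b_one : ⁅A₁, B 1⁆ = C := rfl

theorem lieSpan_a₀_a₁_y : LieSubalgebra.lieSpan K (WEAlgebra K α β) {A₀, A₁, Y} = ⊤ := by
  convert FreeLieAlgebra.lieSpan_range_comp_of_eq_top (f := (weIdeal K α β).mkQ)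
    (LieSubmodule.Quotient.surjective_mk' (weIdeal K α β))
  ext
  simp [Fin.exists_fin_succ, a₀, a₁, y, genA₀, genA₁, genY, eq_comm]

theorem mkQ_eq_zero_of_mem_weRelations {x : FreeLieAlgebra K (Fin 3)}
    (hx : x ∈ weRelations K α β) : (weIdeal K α β).mkQ x = 0 :=
  LieSubmodule.Quotient.mk_eq_zero'.mpr (LieSubmodule.subset_lieSpan hx)

-- The image of each relator is definitionally the bracket expression stated.
theorem lie_a₁_c : ⁅A₁, C⁆ = 0 :=
  mkQ_eq_zero_of_mem_weRelations (by simp [weRelations])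

theorem smul_b_one_add_lie_a₀_c : (4 * α) • B 1 + ⁅A₀, C⁆ = 0 :=
  mkQ_eq_zero_of_mem_weRelations (by simp [weRelations])

theorem lie_a₁_lie_a₁_b_three : ⁅A₁, ⁅A₁, B 3⁆⁆ = 0 :=
  mkQ_eq_zero_of_mem_weRelations (by simp [weRelations])

theorem lie_a₁_b_four_sub_smul_add_smul :
    ⁅A₁, B 4⁆ - β • B 3 + (1 / 2 : K) • ⁅A₀, ⁅A₁, B 3⁆⁆ = 0 :=
  mkQ_eq_zero_of_mem_weRelations (by simp [weRelations])

theorem lie_a₁_y : ⁅A₁, Y⁆ = -B 5 :=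
  eq_neg_of_add_eq_zero_left (mkQ_eq_zero_of_mem_weRelations (by simp [weRelations]))

theorem lie_a₀_y : ⁅A₀, Y⁆ = 0 :=
  mkQ_eq_zero_of_mem_weRelations (by simp [weRelations])

theorem lie_a₀_lie_b_b (m n : ℕ) : ⁅A₀, ⁅B m, B n⁆⁆ = ⁅B (m + 1), B n⁆ + ⁅B m, B (n + 1)⁆ := by
  rw [leibniz_lie, lie_a₀_b, lie_a₀_b]

theorem filtration_antitone : Antitone (filtration K α β) := by
  refine antitone_nat_of_succ_le fun n => ?_
  rcases n with _ | _ | _ | n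
  all_goals
    first
    | exact bot_le
    | exact Submodule.span_mono (Set.range_subset_iff.mpr fun i => by fin_cases i <;> simp)

theorem generators_subset_filtration_zero :
    ({A₀, A₁, Y} : Set (WEAlgebra K α β)) ⊆ filtration K α β 0 := by
  rintro g (rfl | rfl | rfl) <;> exact Submodule.subset_span (by simp)

end Relations

section AlphaZero

variable {K : Type*} [Field K] {β : K}

local notation "A₀" => a₀ K 0 β
local notation "A₁" => a₁ K 0 β
local notation "Y" => y K 0 β
local notation "B" => b K 0 β
local notation "C" => c K 0 β

theorem lie_a₀_c : ⁅A₀, C⁆ = 0 := by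
  simpa using smul_b_one_add_lie_a₀_c (K := K) (α := 0) (β := β)

theorem lie_a₁_b_two : ⁅A₁, B 2⁆ = 0 := by
  have h := lie_a₀_c (β := β)
  rwa [c, leibniz_lie, lie_a₀_a₁, lie_self, zero_add] at h

theorem lie_a₁_b_three : ⁅A₁, B 3⁆ = -⁅B 1, B 2⁆ := by
  have h : ⁅A₀, ⁅A₁, B 2⁆⁆ = 0 := by rw [lie_a₁_b_two, lie_zero]
  rw [leibniz_lie, lie_a₀_a₁, lie_a₀_b] at h
  exact eq_neg_of_add_eq_zero_right h

theorem lie_c_b_two : ⁅C, B 2⁆ = 0 := by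
  have h := lie_a₁_lie_a₁_b_three (K := K) (α := 0) (β := β)
  rwa [lie_a₁_b_three, lie_neg, neg_eq_zero, leibniz_lie, lie_a₁_b_one, lie_a₁_b_two, lie_zero,
    add_zero] at h

theorem lie_c_b {n : ℕ} (hn : 2 ≤ n) : ⁅C, B n⁆ = 0 := by
  induction n, hn using Nat.le_induction with
  | base => exact lie_c_b_two
  | succ n _ ih =>
    have h : ⁅A₀, ⁅C, B n⁆⁆ = 0 := by rw [ih, lie_zero]
    rwa [leibniz_lie, lie_a₀_c, zero_lie, zero_add, lie_a₀_b] at h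

theorem lie_a₁_lie_b_two (x : WEAlgebra K 0 β) : ⁅A₁, ⁅B 2, x⁆⁆ = ⁅B 2, ⁅A₁, x⁆⁆ := by
  rw [leibniz_lie, lie_a₁_b_two, zero_lie, zero_add]

theorem lie_a₁_lie_b_one_b {n : ℕ} (hn : 2 ≤ n) : ⁅A₁, ⁅B 1, B n⁆⁆ = ⁅B 1, ⁅A₁, B n⁆⁆ := by
  rw [leibniz_lie, lie_a₁_b_one, lie_c_b hn, zero_add]

theorem lie_a₁_b_four : ⁅A₁, B 4⁆ = (-2 : K) • ⁅B 1, B 3⁆ := by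
  have h : ⁅A₀, ⁅A₁, B 3⁆⁆ = ⁅B 1, B 3⁆ + ⁅A₁, B 4⁆ := by
    rw [leibniz_lie, lie_a₀_a₁, lie_a₀_b]
  rw [lie_a₁_b_three, lie_neg, lie_a₀_lie_b_b, lie_self, zero_add] at h
  linear_combination (norm := module) -h

theorem lie_b_one_y : ⁅B 1, Y⁆ = -B 6 := by
  rw [← lie_a₀_a₁, lie_lie, lie_a₁_y, lie_a₀_y, lie_neg, lie_a₀_b, lie_zero, sub_zero]

theorem lie_a₁_lie_c_y : ⁅A₁, ⁅C, Y⁆⁆ = 0 := by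
  rw [leibniz_lie, lie_a₁_c, zero_lie, zero_add, lie_a₁_y, lie_neg,
    lie_c_b (by norm_num), neg_zero]

section CharZero

variable [CharZero K]

local notation "γ" => (-2 / 5 * β : K)

theorem lie_b_one_b_three : ⁅B 1, B 3⁆ = γ • B 3 := by
  have h := lie_a₁_b_four_sub_smul_add_smul (K := K) (α := 0) (β := β)
  rw [lie_a₁_b_four, lie_a₁_b_three, lie_neg, lie_a₀_lie_b_b, lie_self, zero_add] at h
  linear_combination (norm := module) (-2 / 5 : K) • h

theorem lie_a₁_b_four_eq_smul : ⁅A₁, B 4⁆ = (-2 * γ) • B 3 := by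
  rw [lie_a₁_b_four, lie_b_one_b_three, smul_smul]

theorem lie_b_two_b_three_add_lie_b_one_b_four : ⁅B 2, B 3⁆ + ⁅B 1, B 4⁆ = γ • B 4 := by
  simpa only [lie_a₀_lie_b_b, lie_smul, lie_a₀_b] using
    congrArg (⁅A₀, ·⁆) (lie_b_one_b_three (β := β))

theorem lie_a₁_lie_b_one_b_four : ⁅A₁, ⁅B 1, B 4⁆⁆ = (-2 * γ * γ) • B 3 := by
  rw [lie_a₁_lie_b_one_b (by norm_num), lie_a₁_b_four_eq_smul, lie_smul, lie_b_one_b_three,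
    smul_smul]

theorem lie_b_two_lie_b_one_b_two : ⁅B 2, ⁅B 1, B 2⁆⁆ = 0 := by
  have h := congrArg (⁅A₁, ·⁆) (lie_b_two_b_three_add_lie_b_one_b_four (β := β))
  rw [lie_add, lie_a₁_lie_b_two, lie_a₁_b_three, lie_neg, lie_a₁_lie_b_one_b_four, lie_smul,
    lie_a₁_b_four_eq_smul] at h
  linear_combination (norm := module) -h

theorem lie_b_three_lie_b_one_b_two : ⁅B 3, ⁅B 1, B 2⁆⁆ = -γ • ⁅B 2, B 3⁆ := by
  have h := congrArg (⁅A₀, ·⁆) (lie_b_two_lie_b_one_b_two (β := β))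
  rw [leibniz_lie, lie_a₀_b, lie_a₀_lie_b_b, lie_self, zero_add, lie_b_one_b_three, lie_smul,
    lie_zero] at h
  linear_combination (norm := module) h

theorem lie_b_one_lie_b_two_b_three : ⁅B 1, ⁅B 2, B 3⁆⁆ = (2 * γ) • ⁅B 2, B 3⁆ := by
  rw [leibniz_lie, ← lie_skew, lie_b_three_lie_b_one_b_two, lie_b_one_b_three, lie_smul]
  module

theorem lie_a₁_b_five : ⁅A₁, B 5⁆ = ⁅B 2, B 3⁆ - (3 * γ) • B 4 := by
  have h := congrArg (⁅A₀, ·⁆) (lie_a₁_b_four_eq_smul (β := β))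
  rw [leibniz_lie, lie_a₀_a₁, lie_a₀_b, lie_smul, lie_a₀_b] at h
  linear_combination (norm := module) h - lie_b_two_b_three_add_lie_b_one_b_four (β := β)

theorem lie_c_y : ⁅C, Y⁆ = -⁅B 2, B 4⁆ + (3 * γ) • B 5 + (2 : K) • ⁅B 1, B 5⁆ := by
  have h := congrArg (⁅A₀, ·⁆) (lie_a₁_b_five (β := β))
  rw [leibniz_lie, lie_a₀_a₁, lie_a₀_b, lie_sub, lie_a₀_lie_b_b, lie_self, zero_add, lie_smul,
    lie_a₀_b] at h
  rw [← lie_a₁_b_one, lie_lie, lie_b_one_y, lie_a₁_y, lie_neg, lie_neg]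
  linear_combination (norm := module) -h

theorem smul_lie_b_two_b_three_sub : (15 * γ) • (⁅B 2, B 3⁆ - γ • B 4) = 0 := by
  have h := lie_a₁_lie_c_y (β := β)
  rw [lie_c_y, lie_add, lie_add, lie_neg, lie_smul, lie_smul, lie_a₁_lie_b_two,
    lie_a₁_b_four_eq_smul, lie_smul, lie_a₁_lie_b_one_b (by norm_num), lie_a₁_b_five, lie_sub,
    lie_smul, lie_b_one_lie_b_two_b_three] at h
  linear_combination (norm := module)
    h + (6 * γ) • lie_b_two_b_three_add_lie_b_one_b_four (β := β)

variable (hβ : β ≠ 0)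
include hβ

theorem lie_b_two_b_three : ⁅B 2, B 3⁆ = γ • B 4 := by
  have h15 : (15 * γ : K) ≠ 0 := mul_ne_zero (by norm_num) (mul_ne_zero (by norm_num) hβ)
  exact sub_eq_zero.mp ((smul_eq_zero.mp smul_lie_b_two_b_three_sub).resolve_left h15)

theorem lie_b_one_b_four : ⁅B 1, B 4⁆ = 0 := by
  linear_combination (norm := module)
    lie_b_two_b_three_add_lie_b_one_b_four (β := β) - lie_b_two_b_three hβ

theorem b_three_eq_zero : B 3 = 0 := by
  have h := lie_a₁_lie_b_one_b_four (β := β)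
  rw [lie_b_one_b_four hβ, lie_zero, eq_comm, smul_eq_zero] at h
  exact h.resolve_left (by simp [hβ])

theorem b_eq_zero {n : ℕ} (hn : 3 ≤ n) : B n = 0 := by
  induction n, hn using Nat.le_induction with
  | base => exact b_three_eq_zero hβ
  | succ n _ ih => rw [← lie_a₀_b, ih, lie_zero]

theorem lie_a₀_b_two : ⁅A₀, B 2⁆ = 0 := b_eq_zero hβ le_rfl

theorem lie_a₁_y_eq_zero : ⁅A₁, Y⁆ = 0 := by
  rw [lie_a₁_y, b_eq_zero hβ (by norm_num), neg_zero]

theorem y_lie (x : WEAlgebra K 0 β) : ⁅Y, x⁆ = 0 := by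
  rw [← lie_skew, neg_eq_zero]
  refine lie_eq_zero_of_forall_lie_generator_eq_zero lieSpan_a₀_a₁_y (fun g hg => ?_) x
  rcases hg with rfl | rfl | rfl
  · exact lie_a₀_y
  · exact lie_a₁_y_eq_zero hβ
  · exact lie_self _

theorem lie_generator_mem_filtration_succ :
    ∀ g ∈ ({A₀, A₁, Y} : Set (WEAlgebra K 0 β)), ∀ k, ∀ v ∈ filtration K 0 β k,
      ⁅g, v⁆ ∈ filtration K 0 β (k + 1) := by
  rintro g hg (_ | _ | _ | k) v hv
  all_goals
    first
    | simp [(Submodule.mem_bot K).mp hv]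
    | refine lie_mem_of_forall_mem_span ?_ hv
      rcases hg with rfl | rfl | rfl <;>
        simp [filtration, ← lie_skew A₁ A₀, lie_a₀_a₁, lie_a₀_b, lie_a₀_b_two hβ, lie_a₀_c,
          lie_a₀_y, lie_a₁_b_one, lie_a₁_b_two, lie_a₁_c, lie_a₁_y_eq_zero hβ, y_lie hβ,
          Submodule.mem_span_of_mem]

theorem filtration_zero_eq_top : filtration K 0 β 0 = ⊤ :=
  eq_top_of_forall_generator lieSpan_a₀_a₁_y filtration_antitone
    (lie_generator_mem_filtration_succ hβ) generators_subset_filtration_zero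

theorem isNilpotent : LieModule.IsNilpotent (WEAlgebra K 0 β) (WEAlgebra K 0 β) :=
  isNilpotent_of_forall_generator lieSpan_a₀_a₁_y filtration_antitone
    (lie_generator_mem_filtration_succ hβ) generators_subset_filtration_zero (n := 3) rfl

theorem rank_le_six : Module.rank K (WEAlgebra K 0 β) ≤ 6 := by
  simpa using rank_le_card_of_span_range_eq_top (filtration_zero_eq_top hβ)

end CharZero

end AlphaZero

end WEAlgebra

/-- For `α = 0` and `β ≠ 0`, the presented Lie algebra `𝔥(0,β)` is a
nilpotent Lie algebra of dimension at most 6. -/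
theorem stmt_11 (hβ : β ≠ 0) :
    LieModule.IsNilpotent (WEAlgebra K 0 β) (WEAlgebra K 0 β) ∧
    Module.rank K (WEAlgebra K 0 β) ≤ 6 :=
  ⟨WEAlgebra.isNilpotent hβ, WEAlgebra.rank_le_six hβ⟩

end
end

section
/- Let 𝔤 be a Lie algebra over K, let A₀, A₁ ∈ 𝔤 and α, β ∈ K satisfy relations (R1), (R2) and (R4). Then [A₁,[A₀,[A₀,[A₀,[A₀,A₁]]]]] = (4/5)(α+β)·[A₀,[A₀,[A₀,A₁]]]. -/
/-- If `A₀, A₁` in a Lie algebra over a field `K` of characteristic zero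
satisfy relations (R1), (R2), (R4), then
`[A₁,[A₀,[A₀,[A₀,[A₀,A₁]]]]] = (4/5)(α+β)·[A₀,[A₀,[A₀,A₁]]]`. -/
theorem stmt_13 {K : Type*} [Field K] [CharZero K]
    {𝔤 : Type*} [LieRing 𝔤] [LieAlgebra K 𝔤] (α β : K) (A₀ A₁ : 𝔤)
    (hR1 : ⁅A₁, ⁅A₁, ⁅A₀, A₁⁆⁆⁆ = 0)
    (hR2 : (4 * α) • ⁅A₀, A₁⁆ + ⁅A₀, ⁅A₁, ⁅A₀, A₁⁆⁆⁆ = 0)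
    (hR4 : ⁅A₁, ⁅A₀, ⁅A₀, ⁅A₀, ⁅A₀, A₁⁆⁆⁆⁆⁆ - β • ⁅A₀, ⁅A₀, ⁅A₀, A₁⁆⁆⁆
        + ((1 : K) / 2) • ⁅A₀, ⁅A₁, ⁅A₀, ⁅A₀, ⁅A₀, A₁⁆⁆⁆⁆⁆ = 0) :
    ⁅A₁, ⁅A₀, ⁅A₀, ⁅A₀, ⁅A₀, A₁⁆⁆⁆⁆⁆
      = ((4 : K) / 5 * (α + β)) • ⁅A₀, ⁅A₀, ⁅A₀, A₁⁆⁆⁆ := by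
  set B₁ : 𝔤 := ⁅A₀, A₁⁆ with hB1
  set B₂ : 𝔤 := ⁅A₀, B₁⁆ with hB2
  set B₃ : 𝔤 := ⁅A₀, B₂⁆ with hB3
  set B₄ : 𝔤 := ⁅A₀, B₃⁆ with hB4
  have hC : ⁅A₀, ⁅A₁, B₁⁆⁆ = -((4 * α) • B₁) := by
    have := hR2; linear_combination (norm := module) hR2
  have hskew : ⁅A₁, A₀⁆ = -B₁ := by rw [← lie_skew]
  have h2 : ⁅A₁, B₂⁆ = -((4 * α) • B₁) := by
    rw [hB2, leibniz_lie, hskew, neg_lie, lie_self, neg_zero, zero_add, hC]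
  have h3 : ⁅A₁, B₃⁆ = -⁅B₁, B₂⁆ - (4 * α) • B₂ := by
    rw [hB3, leibniz_lie, hskew, neg_lie, h2, lie_neg, lie_smul, ← hB2]
    module
  have h5 : ⁅A₀, ⁅A₁, B₃⁆⁆ = -⁅B₁, B₃⁆ - (4 * α) • B₃ := by
    rw [h3]
    have : ⁅A₀, ⁅B₁, B₂⁆⁆ = ⁅B₁, B₃⁆ := by
      rw [leibniz_lie, ← hB2, lie_self, zero_add, ← hB3]
    rw [lie_sub, lie_neg, this, lie_smul, ← hB3]
  have h6 : ⁅A₁, B₄⁆ = -⁅B₁, B₃⁆ + ⁅A₀, ⁅A₁, B₃⁆⁆ := by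
    rw [hB4, leibniz_lie, hskew, neg_lie]
  have hW : ⁅A₁, B₄⁆ = (2 : K) • ⁅A₀, ⁅A₁, B₃⁆⁆ + (4 * α) • B₃ := by
    rw [h6, h5]
    module
  -- hR4 in these terms
  have hR4' : ⁅A₁, B₄⁆ - β • B₃ + ((1 : K) / 2) • ⁅A₀, ⁅A₁, B₃⁆⁆ = 0 := hR4
  -- eliminate X
  have hX : ⁅A₀, ⁅A₁, B₃⁆⁆ = ((1:K)/2) • ⁅A₁, B₄⁆ - (2 * α) • B₃ := by
    have h := hW
    have : ((1:K)/2) • (⁅A₁, B₄⁆) = ((1:K)/2) • ((2 : K) • ⁅A₀, ⁅A₁, B₃⁆⁆ + (4 * α) • B₃) := by rw [← h]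
    rw [this]
    match_scalars <;> ring
  have hfin : ((5:K)/4) • ⁅A₁, B₄⁆ = (α + β) • B₃ := by
    have := hR4'
    rw [hX] at this
    linear_combination (norm := module) this
  have : ⁅A₁, B₄⁆ = ((4:K)/5) • (((5:K)/4) • ⁅A₁, B₄⁆) := by
    match_scalars; ring
  rw [this, hfin]
  match_scalars; ring
end

section
/- Let 𝔤 be a Lie algebra over K, let A₀, A₁ ∈ 𝔤 and α, β ∈ K satisfy relations (R1), (R2) and (R4). Then [A₁,[A₀,[A₀,[A₀,[A₀,[A₀,A₁]]]]]] = [[A₀,[A₀,A₁]],[A₀,[A₀,[A₀,A₁]]]] + ((16/5)α + (6/5)β)·[A₀,[A₀,[A₀,[A₀,A₁]]]]. -/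
/-- If `A₀, A₁` in a Lie algebra over a field `K` of characteristic zero
satisfy relations (R1), (R2), (R4), then
`[A₁,[A₀,[A₀,[A₀,[A₀,[A₀,A₁]]]]]] = [[A₀,[A₀,A₁]],[A₀,[A₀,[A₀,A₁]]]]
  + ((16/5)α + (6/5)β)·[A₀,[A₀,[A₀,[A₀,A₁]]]]`. -/
theorem stmt_14 {K : Type*} [Field K] [CharZero K]
    {𝔤 : Type*} [LieRing 𝔤] [LieAlgebra K 𝔤] (α β : K) (A₀ A₁ : 𝔤)
    (hR1 : ⁅A₁, ⁅A₁, ⁅A₀, A₁⁆⁆⁆ = 0)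
    (hR2 : (4 * α) • ⁅A₀, A₁⁆ + ⁅A₀, ⁅A₁, ⁅A₀, A₁⁆⁆⁆ = 0)
    (hR4 : ⁅A₁, ⁅A₀, ⁅A₀, ⁅A₀, ⁅A₀, A₁⁆⁆⁆⁆⁆ - β • ⁅A₀, ⁅A₀, ⁅A₀, A₁⁆⁆⁆
        + ((1 : K) / 2) • ⁅A₀, ⁅A₁, ⁅A₀, ⁅A₀, ⁅A₀, A₁⁆⁆⁆⁆⁆ = 0) :
    ⁅A₁, ⁅A₀, ⁅A₀, ⁅A₀, ⁅A₀, ⁅A₀, A₁⁆⁆⁆⁆⁆⁆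
      = ⁅⁅A₀, ⁅A₀, A₁⁆⁆, ⁅A₀, ⁅A₀, ⁅A₀, A₁⁆⁆⁆⁆
        + ((16 : K) / 5 * α + (6 : K) / 5 * β) • ⁅A₀, ⁅A₀, ⁅A₀, ⁅A₀, A₁⁆⁆⁆⁆ := by
  have key : ∀ z : 𝔤, ⁅A₀, ⁅A₁, z⁆⁆ = ⁅⁅A₀, A₁⁆, z⁆ + ⁅A₁, ⁅A₀, z⁆⁆ :=
    fun z => leibniz_lie A₀ A₁ z
  -- C₂ = -(4α) • B₁
  have e2 : ⁅A₁, ⁅A₀, ⁅A₀, A₁⁆⁆⁆ = (-(4*α)) • ⁅A₀, A₁⁆ := by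
    have h := hR2
    rw [key] at h
    simp only [lie_self, zero_add] at h
    linear_combination (norm := module) h
  -- C₃ = -(4α) • B₂ - ⁅B₁, B₂⁆
  have e3 : ⁅A₁, ⁅A₀, ⁅A₀, ⁅A₀, A₁⁆⁆⁆⁆
      = (-(4*α)) • ⁅A₀, ⁅A₀, A₁⁆⁆ - ⁅⁅A₀, A₁⁆, ⁅A₀, ⁅A₀, A₁⁆⁆⁆ := by
    have h := congrArg (fun x => ⁅A₀, x⁆) e2
    simp only [lie_smul] at h
    rw [key] at h
    linear_combination (norm := module) h
  -- C₄ = -(4α) • B₃ - 2 • ⁅B₁, B₃⁆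
  have e4a : ⁅A₁, ⁅A₀, ⁅A₀, ⁅A₀, ⁅A₀, A₁⁆⁆⁆⁆⁆
      = (-(4*α)) • ⁅A₀, ⁅A₀, ⁅A₀, A₁⁆⁆⁆ - (2:K) • ⁅⁅A₀, A₁⁆, ⁅A₀, ⁅A₀, ⁅A₀, A₁⁆⁆⁆⁆ := by
    have h := congrArg (fun x => ⁅A₀, x⁆) e3
    simp only [lie_smul, lie_sub] at h
    rw [key, leibniz_lie A₀ ⁅A₀, A₁⁆] at h
    simp only [lie_self, zero_lie, zero_add] at h
    linear_combination (norm := module) h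
  -- From R4 : ⁅B₁, B₃⁆ = ((-(12*α) - 2*β)/5) • B₃
  have e13 : ⁅⁅A₀, A₁⁆, ⁅A₀, ⁅A₀, ⁅A₀, A₁⁆⁆⁆⁆
      = ((-(12*α) - 2*β)/5) • ⁅A₀, ⁅A₀, ⁅A₀, A₁⁆⁆⁆ := by
    have h := hR4
    rw [key] at h
    linear_combination (norm := module) ((-2:K)/5 : K) • h + ((3:K)/5 : K) • e4a
  -- C₄ = ((4α+4β)/5) • B₃
  have e4 : ⁅A₁, ⁅A₀, ⁅A₀, ⁅A₀, ⁅A₀, A₁⁆⁆⁆⁆⁆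
      = ((4*α + 4*β)/5) • ⁅A₀, ⁅A₀, ⁅A₀, A₁⁆⁆⁆ := by
    rw [e4a, e13]
    match_scalars <;> field_simp <;> ring
  -- apply ad A₀ to e13
  have e14 : ⁅⁅A₀, ⁅A₀, A₁⁆⁆, ⁅A₀, ⁅A₀, ⁅A₀, A₁⁆⁆⁆⁆
        + ⁅⁅A₀, A₁⁆, ⁅A₀, ⁅A₀, ⁅A₀, ⁅A₀, A₁⁆⁆⁆⁆⁆
      = ((-(12*α) - 2*β)/5) • ⁅A₀, ⁅A₀, ⁅A₀, ⁅A₀, A₁⁆⁆⁆⁆ := by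
    have h := congrArg (fun x => ⁅A₀, x⁆) e13
    simp only [lie_smul] at h
    rw [leibniz_lie A₀ ⁅A₀, A₁⁆] at h
    linear_combination (norm := module) h
  -- apply ad A₀ to e4
  have e5 : ⁅⁅A₀, A₁⁆, ⁅A₀, ⁅A₀, ⁅A₀, ⁅A₀, A₁⁆⁆⁆⁆⁆
        + ⁅A₁, ⁅A₀, ⁅A₀, ⁅A₀, ⁅A₀, ⁅A₀, A₁⁆⁆⁆⁆⁆⁆
      = ((4*α + 4*β)/5) • ⁅A₀, ⁅A₀, ⁅A₀, ⁅A₀, A₁⁆⁆⁆⁆ := by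
    have h := congrArg (fun x => ⁅A₀, x⁆) e4
    simp only [lie_smul] at h
    rw [key] at h
    linear_combination (norm := module) h
  linear_combination (norm := module) e5 - e14 +
    congrArg (fun t : K => t • ⁅A₀, ⁅A₀, ⁅A₀, ⁅A₀, A₁⁆⁆⁆⁆) (by ring :
      ((4*α + 4*β)/5) - ((-(12*α) - 2*β)/5) = ((16 : K) / 5 * α + (6 : K) / 5 * β))
end

section
/- Let 𝔤 be a Lie algebra over K, let A₀, A₁, Y ∈ 𝔤 and α, β ∈ K satisfy relations (R1)–(R6), and assume (α+β)(6α+β)(16α+β) ≠ 0. Then the three elements Y, Z₀ = −4αA₀ + [A₀,[A₀,A₁]], and Z₁ = 4αA₁ + [A₁,[A₀,A₁]] lie in the center of the Lie subalgebra of 𝔤 generated by {A₀, A₁, Y}; that is, [Y,C] = [Z₀,C] = [Z₁,C] = 0 for every C in that subalgebra. -/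
/-- If `A₀, A₁, Y` in a Lie algebra over a field `K` of characteristic zero
satisfy relations (R1)–(R6) and `(α+β)(6α+β)(16α+β) ≠ 0`, then `Y`,
`Z₀ = −4αA₀ + [A₀,[A₀,A₁]]` and `Z₁ = 4αA₁ + [A₁,[A₀,A₁]]` lie in the center of the Lie
subalgebra generated by `{A₀, A₁, Y}`. -/
theorem stmt_16 {K : Type*} [Field K] [CharZero K]
    {𝔤 : Type*} [LieRing 𝔤] [LieAlgebra K 𝔤] (α β : K) (A₀ A₁ Y : 𝔤)
    (hR1 : ⁅A₁, ⁅A₁, ⁅A₀, A₁⁆⁆⁆ = 0)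
    (hR2 : (4 * α) • ⁅A₀, A₁⁆ + ⁅A₀, ⁅A₁, ⁅A₀, A₁⁆⁆⁆ = 0)
    (hR3 : ⁅A₁, ⁅A₁, ⁅A₀, ⁅A₀, ⁅A₀, A₁⁆⁆⁆⁆⁆ = 0)
    (hR4 : ⁅A₁, ⁅A₀, ⁅A₀, ⁅A₀, ⁅A₀, A₁⁆⁆⁆⁆⁆ - β • ⁅A₀, ⁅A₀, ⁅A₀, A₁⁆⁆⁆
        + ((1 : K) / 2) • ⁅A₀, ⁅A₁, ⁅A₀, ⁅A₀, ⁅A₀, A₁⁆⁆⁆⁆⁆ = 0)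
    (hR5 : ⁅A₁, Y⁆ + ⁅A₀, ⁅A₀, ⁅A₀, ⁅A₀, ⁅A₀, A₁⁆⁆⁆⁆⁆ = 0)
    (hR6 : ⁅A₀, Y⁆ = 0)
    (hne : (α + β) * (6 * α + β) * (16 * α + β) ≠ 0) :
    Y ∈ LieSubalgebra.lieSpan K 𝔤 {A₀, A₁, Y} ∧
    (-(4 * α)) • A₀ + ⁅A₀, ⁅A₀, A₁⁆⁆ ∈ LieSubalgebra.lieSpan K 𝔤 {A₀, A₁, Y} ∧
    (4 * α) • A₁ + ⁅A₁, ⁅A₀, A₁⁆⁆ ∈ LieSubalgebra.lieSpan K 𝔤 {A₀, A₁, Y} ∧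
    ∀ C ∈ LieSubalgebra.lieSpan K 𝔤 {A₀, A₁, Y},
      ⁅Y, C⁆ = 0 ∧
      ⁅(-(4 * α)) • A₀ + ⁅A₀, ⁅A₀, A₁⁆⁆, C⁆ = 0 ∧
      ⁅(4 * α) • A₁ + ⁅A₁, ⁅A₀, A₁⁆⁆, C⁆ = 0 := by
  -- scalar facts
  have hne1 : (α + β) * (6 * α + β) ≠ 0 := (mul_ne_zero_iff.mp hne).1
  have h16 : (16 * α + β) ≠ 0 := (mul_ne_zero_iff.mp hne).2
  have hab : (α + β) ≠ 0 := (mul_ne_zero_iff.mp hne1).1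
  have h6 : (6 * α + β) ≠ 0 := (mul_ne_zero_iff.mp hne1).2
  -- abbreviations
  set u1 : 𝔤 := ⁅A₀, A₁⁆ with su1
  set u2 : 𝔤 := ⁅A₀, u1⁆ with su2
  set u3 : 𝔤 := ⁅A₀, u2⁆ with su3
  set u4 : 𝔤 := ⁅A₀, u3⁆ with su4
  set u5 : 𝔤 := ⁅A₀, u4⁆ with su5
  set u6 : 𝔤 := ⁅A₀, u5⁆ with su6
  set v : 𝔤 := ⁅A₁, u1⁆ with sv
  set w : 𝔤 := ⁅u1, u2⁆ with sw
  set p : 𝔤 := ⁅u2, u3⁆ with sp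
  set q : 𝔤 := ⁅u2, u4⁆ with sq
  set c : K := (-2/5) * (6*α + β) with sc
  have hcne : c ≠ 0 := by
    rw [sc]; exact mul_ne_zero (by norm_num) h6
  -- swap lemma
  have swap : ∀ X : 𝔤, ⁅A₁, ⁅A₀, X⁆⁆ = ⁅A₀, ⁅A₁, X⁆⁆ - ⁅u1, X⁆ := by
    intro X
    have hs : ⁅A₁, A₀⁆ = -u1 := by rw [su1, ← lie_skew]
    rw [leibniz_lie, hs, neg_lie]; abel
  have hav : ⁅A₀, v⁆ = (-(4*α)) • u1 := by
    linear_combination (norm := module) hR2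
  have hbu2 : ⁅A₁, u2⁆ = (-(4*α)) • u1 := by
    have h := swap u1
    simp only [hav, lie_add, lie_sub, lie_smul, add_lie, sub_lie, smul_lie, lie_neg, neg_lie, lie_zero, zero_lie, lie_self, smul_zero, zero_smul, neg_zero, add_zero, zero_add, sub_zero, ← su1, ← su2, ← su3, ← su4, ← su5, ← su6, ← sv, ← sw, ← sp, ← sq] at h
    first
      | exact h
      | exact h.symm
      | linear_combination (norm := module) h
      | linear_combination (norm := module) (-1 : K) • h
  have hbu3 : ⁅A₁, u3⁆ = (-(4*α)) • u2 - w := by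
    have h := swap u2
    simp only [hbu2, lie_add, lie_sub, lie_smul, add_lie, sub_lie, smul_lie, lie_neg, neg_lie, lie_zero, zero_lie, lie_self, smul_zero, zero_smul, neg_zero, add_zero, zero_add, sub_zero, ← su1, ← su2, ← su3, ← su4, ← su5, ← su6, ← sv, ← sw, ← sp, ← sq] at h
    first
      | exact h
      | exact h.symm
      | linear_combination (norm := module) h
      | linear_combination (norm := module) (-1 : K) • h
  have haw : ⁅A₀, w⁆ = ⁅u1, u3⁆ := by
    have h := leibniz_lie A₀ u1 u2
    simp only [lie_add, lie_sub, lie_smul, add_lie, sub_lie, smul_lie, lie_neg, neg_lie, lie_zero, zero_lie, lie_self, smul_zero, zero_smul, neg_zero, add_zero, zero_add, sub_zero, ← su1, ← su2, ← su3, ← su4, ← su5, ← su6, ← sv, ← sw, ← sp, ← sq] at h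
    first
      | exact h
      | exact h.symm
      | linear_combination (norm := module) h
      | linear_combination (norm := module) (-1 : K) • h
  have hbu4 : ⁅A₁, u4⁆ = (-(4*α)) • u3 - (2:K) • ⁅u1, u3⁆ := by
    have h := swap u3
    simp only [hbu3, haw, lie_add, lie_sub, lie_smul, add_lie, sub_lie, smul_lie, lie_neg, neg_lie, lie_zero, zero_lie, lie_self, smul_zero, zero_smul, neg_zero, add_zero, zero_add, sub_zero, ← su1, ← su2, ← su3, ← su4, ← su5, ← su6, ← sv, ← sw, ← sp, ← sq] at h
    first
      | exact h
      | exact h.symm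
      | linear_combination (norm := module) h
      | linear_combination (norm := module) (-1 : K) • h
  have hbw : ⁅A₁, w⁆ = (16*α^2) • u1 := by
    have h := hR3
    simp only [hbu3, hbu2, lie_add, lie_sub, lie_smul, add_lie, sub_lie, smul_lie, lie_neg, neg_lie, lie_zero, zero_lie, lie_self, smul_zero, zero_smul, neg_zero, add_zero, zero_add, sub_zero, ← su1, ← su2, ← su3, ← su4, ← su5, ← su6, ← sv, ← sw, ← sp, ← sq] at h
    first
      | exact h
      | exact h.symm
      | linear_combination (norm := module) h
      | linear_combination (norm := module) (-1 : K) • h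
  have hvu2 : ⁅v, u2⁆ = (16*α^2) • u1 := by
    have h := leibniz_lie A₁ u1 u2
    simp only [hbu2, hbw, lie_add, lie_sub, lie_smul, add_lie, sub_lie, smul_lie, lie_neg, neg_lie, lie_zero, zero_lie, lie_self, smul_zero, zero_smul, neg_zero, add_zero, zero_add, sub_zero, ← su1, ← su2, ← su3, ← su4, ← su5, ← su6, ← sv, ← sw, ← sp, ← sq] at h
    first
      | exact h
      | exact h.symm
      | linear_combination (norm := module) h
      | linear_combination (norm := module) (-1 : K) • h
  have hu13 : ⁅u1, u3⁆ = c • u3 := by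
    have h := hR4
    simp only [hbu4, hbu3, haw, lie_add, lie_sub, lie_smul, add_lie, sub_lie, smul_lie, lie_neg, neg_lie, lie_zero, zero_lie, lie_self, smul_zero, zero_smul, neg_zero, add_zero, zero_add, sub_zero, ← su1, ← su2, ← su3, ← su4, ← su5, ← su6, ← sv, ← sw, ← sp, ← sq] at h
    rw [sc]
    linear_combination (norm := module) ((-2)/5 : K) • h
  have haw' : ⁅A₀, w⁆ = c • u3 := by rw [haw, hu13]
  have hbu4' : ⁅A₁, u4⁆ = (-(4*α) - 2*c) • u3 := by
    rw [hbu4, hu13]; module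
  have hu14 : ⁅u1, u4⁆ = c • u4 - p := by
    have h := leibniz_lie A₀ u1 u3
    simp only [hu13, lie_add, lie_sub, lie_smul, add_lie, sub_lie, smul_lie, lie_neg, neg_lie, lie_zero, zero_lie, lie_self, smul_zero, zero_smul, neg_zero, add_zero, zero_add, sub_zero, ← su1, ← su2, ← su3, ← su4, ← su5, ← su6, ← sv, ← sw, ← sp, ← sq] at h
    first
      | exact h
      | exact h.symm
      | linear_combination (norm := module) h
      | linear_combination (norm := module) (-1 : K) • h
  have hbu5 : ⁅A₁, u5⁆ = p + (-(4*α) - 3*c) • u4 := by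
    have h := swap u4
    simp only [hbu4', hu14, lie_add, lie_sub, lie_smul, add_lie, sub_lie, smul_lie, lie_neg, neg_lie, lie_zero, zero_lie, lie_self, smul_zero, zero_smul, neg_zero, add_zero, zero_add, sub_zero, ← su1, ← su2, ← su3, ← su4, ← su5, ← su6, ← sv, ← sw, ← sp, ← sq] at h
    first
      | exact h
      | exact h.symm
      | linear_combination (norm := module) h
      | linear_combination (norm := module) (-1 : K) • h
  have hap : ⁅A₀, p⁆ = q := by
    have h := leibniz_lie A₀ u2 u3
    simp only [lie_add, lie_sub, lie_smul, add_lie, sub_lie, smul_lie, lie_neg, neg_lie, lie_zero, zero_lie, lie_self, smul_zero, zero_smul, neg_zero, add_zero, zero_add, sub_zero, ← su1, ← su2, ← su3, ← su4, ← su5, ← su6, ← sv, ← sw, ← sp, ← sq] at h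
    first
      | exact h
      | exact h.symm
      | linear_combination (norm := module) h
      | linear_combination (norm := module) (-1 : K) • h
  have hu15 : ⁅u1, u5⁆ = c • u5 - (2:K) • q := by
    have h := leibniz_lie A₀ u1 u4
    simp only [hu14, hap, lie_add, lie_sub, lie_smul, add_lie, sub_lie, smul_lie, lie_neg, neg_lie, lie_zero, zero_lie, lie_self, smul_zero, zero_smul, neg_zero, add_zero, zero_add, sub_zero, ← su1, ← su2, ← su3, ← su4, ← su5, ← su6, ← sv, ← sw, ← sp, ← sq] at h
    first
      | exact h
      | exact h.symm
      | linear_combination (norm := module) h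
      | linear_combination (norm := module) (-1 : K) • h
  have hbu6 : ⁅A₁, u6⁆ = (3:K) • q + (-(4*α) - 4*c) • u5 := by
    have h := swap u5
    simp only [hbu5, hap, hu15, lie_add, lie_sub, lie_smul, add_lie, sub_lie, smul_lie, lie_neg, neg_lie, lie_zero, zero_lie, lie_self, smul_zero, zero_smul, neg_zero, add_zero, zero_add, sub_zero, ← su1, ← su2, ← su3, ← su4, ← su5, ← su6, ← sv, ← sw, ← sp, ← sq] at h
    first
      | exact h
      | exact h.symm
      | linear_combination (norm := module) h
      | linear_combination (norm := module) (-1 : K) • h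
  have hvu3 : ⁅v, u3⁆ = (16*α^2) • u2 + (4*α) • w := by
    have h := leibniz_lie A₀ v u2
    simp only [hvu2, hav, lie_add, lie_sub, lie_smul, add_lie, sub_lie, smul_lie, lie_neg, neg_lie, lie_zero, zero_lie, lie_self, smul_zero, zero_smul, neg_zero, add_zero, zero_add, sub_zero, ← su1, ← su2, ← su3, ← su4, ← su5, ← su6, ← sv, ← sw, ← sp, ← sq] at h
    first
      | exact h
      | exact h.symm
      | linear_combination (norm := module) h
      | linear_combination (norm := module) (-1 : K) • h
  have hvu4 : ⁅v, u4⁆ = (16*α^2 + 8*α*c) • u3 := by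
    have h := leibniz_lie A₀ v u3
    simp only [hvu3, hav, haw', hu13, lie_add, lie_sub, lie_smul, add_lie, sub_lie, smul_lie, lie_neg, neg_lie, lie_zero, zero_lie, lie_self, smul_zero, zero_smul, neg_zero, add_zero, zero_add, sub_zero, ← su1, ← su2, ← su3, ← su4, ← su5, ← su6, ← sv, ← sw, ← sp, ← sq] at h
    first
      | exact h
      | exact h.symm
      | linear_combination (norm := module) h
      | linear_combination (norm := module) (-1 : K) • h
  have hvu5 : ⁅v, u5⁆ = (16*α^2 + 12*α*c) • u4 - (4*α) • p := by
    have h := leibniz_lie A₀ v u4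
    simp only [hvu4, hav, hu14, lie_add, lie_sub, lie_smul, add_lie, sub_lie, smul_lie, lie_neg, neg_lie, lie_zero, zero_lie, lie_self, smul_zero, zero_smul, neg_zero, add_zero, zero_add, sub_zero, ← su1, ← su2, ← su3, ← su4, ← su5, ← su6, ← sv, ← sw, ← sp, ← sq] at h
    first
      | exact h
      | exact h.symm
      | linear_combination (norm := module) h
      | linear_combination (norm := module) (-1 : K) • h
  have hu1w : ⁅u1, w⁆ = (16*α^2 + 4*α*c) • u2 + c • w := by
    have h := leibniz_lie A₁ u1 u3
    simp only [hu13, hbu3, hvu3, lie_add, lie_sub, lie_smul, add_lie, sub_lie, smul_lie, lie_neg, neg_lie, lie_zero, zero_lie, lie_self, smul_zero, zero_smul, neg_zero, add_zero, zero_add, sub_zero, ← su1, ← su2, ← su3, ← su4, ← su5, ← su6, ← sv, ← sw, ← sp, ← sq] at h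
    first
      | exact h
      | exact h.symm
      | linear_combination (norm := module) h
      | linear_combination (norm := module) (-1 : K) • h
  have hu2w : ⁅u2, w⁆ = (16*α^2 + 4*α*c) • u3 := by
    have h := leibniz_lie A₀ u1 w
    simp only [hu1w, haw', hu13, lie_add, lie_sub, lie_smul, add_lie, sub_lie, smul_lie, lie_neg, neg_lie, lie_zero, zero_lie, lie_self, smul_zero, zero_smul, neg_zero, add_zero, zero_add, sub_zero, ← su1, ← su2, ← su3, ← su4, ← su5, ← su6, ← sv, ← sw, ← sp, ← sq] at h
    first
      | exact h
      | exact h.symm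
      | linear_combination (norm := module) h
      | linear_combination (norm := module) (-1 : K) • h
  have hu3w : ⁅u3, w⁆ = (16*α^2 + 4*α*c) • u4 - c • p := by
    have h := leibniz_lie A₀ u2 w
    simp only [hu2w, haw', lie_add, lie_sub, lie_smul, add_lie, sub_lie, smul_lie, lie_neg, neg_lie, lie_zero, zero_lie, lie_self, smul_zero, zero_smul, neg_zero, add_zero, zero_add, sub_zero, ← su1, ← su2, ← su3, ← su4, ← su5, ← su6, ← sv, ← sw, ← sp, ← sq] at h
    first
      | exact h
      | exact h.symm
      | linear_combination (norm := module) h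
      | linear_combination (norm := module) (-1 : K) • h
  have hwu3 : ⁅w, u3⁆ = -((16*α^2 + 4*α*c) • u4 - c • p) := by
    rw [← hu3w, ← lie_skew]
  have hu1p : ⁅u1, p⁆ = (-(16*α^2) - 4*α*c) • u4 + (2*c) • p := by
    have h := leibniz_lie u1 u2 u3
    simp only [hu13, hwu3, lie_add, lie_sub, lie_smul, add_lie, sub_lie, smul_lie, lie_neg, neg_lie, lie_zero, zero_lie, lie_self, smul_zero, zero_smul, neg_zero, add_zero, zero_add, sub_zero, ← su1, ← su2, ← su3, ← su4, ← su5, ← su6, ← sv, ← sw, ← sp, ← sq] at h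
    first
      | exact h
      | exact h.symm
      | linear_combination (norm := module) h
      | linear_combination (norm := module) (-1 : K) • h
  have hbp : ⁅A₁, p⁆ = (-(16*α^2) - 8*α*c) • u3 := by
    have h := leibniz_lie A₁ u2 u3
    simp only [hbu2, hbu3, hu13, hu2w, lie_add, lie_sub, lie_smul, add_lie, sub_lie, smul_lie, lie_neg, neg_lie, lie_zero, zero_lie, lie_self, smul_zero, zero_smul, neg_zero, add_zero, zero_add, sub_zero, ← su1, ← su2, ← su3, ← su4, ← su5, ← su6, ← sv, ← sw, ← sp, ← sq] at h
    first
      | exact h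
      | exact h.symm
      | linear_combination (norm := module) h
      | linear_combination (norm := module) (-1 : K) • h
  have hbq : ⁅A₁, q⁆ = (-(4*α*c)) • u4 - (2*c) • p := by
    have h := leibniz_lie A₁ u2 u4
    simp only [hbu2, hbu4', hu14, lie_add, lie_sub, lie_smul, add_lie, sub_lie, smul_lie, lie_neg, neg_lie, lie_zero, zero_lie, lie_self, smul_zero, zero_smul, neg_zero, add_zero, zero_add, sub_zero, ← su1, ← su2, ← su3, ← su4, ← su5, ← su6, ← sv, ← sw, ← sp, ← sq] at h
    first
      | exact h
      | exact h.symm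
      | linear_combination (norm := module) h
      | linear_combination (norm := module) (-1 : K) • h
  have hbY : ⁅A₁, Y⁆ = -u5 := by
    linear_combination (norm := module) hR5
  have hu1Y : ⁅u1, Y⁆ = -u6 := by
    have h := swap Y
    simp only [hR6, hbY, lie_add, lie_sub, lie_smul, add_lie, sub_lie, smul_lie, lie_neg, neg_lie, lie_zero, zero_lie, lie_self, smul_zero, zero_smul, neg_zero, add_zero, zero_add, sub_zero, ← su1, ← su2, ← su3, ← su4, ← su5, ← su6, ← sv, ← sw, ← sp, ← sq] at h
    first
      | exact h
      | exact h.symm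
      | linear_combination (norm := module) h
      | linear_combination (norm := module) (-1 : K) • h
  have hvY : ⁅v, Y⁆ = -⁅A₁, u6⁆ + ⁅u1, u5⁆ := by
    have h := leibniz_lie A₁ u1 Y
    simp only [hu1Y, hbY, lie_add, lie_sub, lie_smul, add_lie, sub_lie, smul_lie, lie_neg, neg_lie, lie_zero, zero_lie, lie_self, smul_zero, zero_smul, neg_zero, add_zero, zero_add, sub_zero, ← su1, ← su2, ← su3, ← su4, ← su5, ← su6, ← sv, ← sw, ← sp, ← sq] at h
    first
      | exact h
      | exact h.symm
      | linear_combination (norm := module) h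
      | linear_combination (norm := module) (-1 : K) • h
  have e0 : ⁅A₁, ⁅v, Y⁆⁆ = -⁅v, u5⁆ := by
    have h := leibniz_lie A₁ v Y
    simp only [hR1, hbY, lie_add, lie_sub, lie_smul, add_lie, sub_lie, smul_lie, lie_neg, neg_lie, lie_zero, zero_lie, lie_self, smul_zero, zero_smul, neg_zero, add_zero, zero_add, sub_zero, ← su1, ← su2, ← su3, ← su4, ← su5, ← su6, ← sv, ← sw, ← sp, ← sq] at h
    first
      | exact h
      | exact h.symm
      | linear_combination (norm := module) h
      | linear_combination (norm := module) (-1 : K) • h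
  have e1 : ⁅A₁, ⁅v, Y⁆⁆ = -⁅A₁, ⁅A₁, u6⁆⁆ + (⁅v, u5⁆ + ⁅u1, ⁅A₁, u5⁆⁆) := by
    rw [hvY]
    simp only [leibniz_lie A₁ u1 u5, lie_add, lie_sub, lie_smul, add_lie, sub_lie, smul_lie, lie_neg, neg_lie, lie_zero, zero_lie, lie_self, smul_zero, zero_smul, neg_zero, add_zero, zero_add, sub_zero, ← su1, ← su2, ← su3, ← su4, ← su5, ← su6, ← sv, ← sw, ← sp, ← sq]
  have hbbu6 : ⁅A₁, ⁅A₁, u6⁆⁆ = (16*α^2 + 16*α*c + 12*c^2) • u4 + (-(4*α) - 10*c) • p := by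
    have h := congrArg (fun t => ⁅A₁, t⁆) hbu6
    simp only [hbq, hbu5, lie_add, lie_sub, lie_smul, add_lie, sub_lie, smul_lie, lie_neg, neg_lie, lie_zero, zero_lie, lie_self, smul_zero, zero_smul, neg_zero, add_zero, zero_add, sub_zero, ← su1, ← su2, ← su3, ← su4, ← su5, ← su6, ← sv, ← sw, ← sp, ← sq] at h
    first
      | exact h
      | exact h.symm
      | linear_combination (norm := module) h
      | linear_combination (norm := module) (-1 : K) • h
  have hu1bu5 : ⁅u1, ⁅A₁, u5⁆⁆ = (-(16*α^2) - 8*α*c - 3*c^2) • u4 + (4*α + 5*c) • p := by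
    have h := congrArg (fun t => ⁅u1, t⁆) hbu5
    simp only [hu1p, hu14, lie_add, lie_sub, lie_smul, add_lie, sub_lie, smul_lie, lie_neg, neg_lie, lie_zero, zero_lie, lie_self, smul_zero, zero_smul, neg_zero, add_zero, zero_add, sub_zero, ← su1, ← su2, ← su3, ← su4, ← su5, ← su6, ← sv, ← sw, ← sp, ← sq] at h
    first
      | exact h
      | exact h.symm
      | linear_combination (norm := module) h
      | linear_combination (norm := module) (-1 : K) • h
  have e2 : -⁅A₁, ⁅A₁, u6⁆⁆ + (⁅v, u5⁆ + ⁅u1, ⁅A₁, u5⁆⁆) = -⁅v, u5⁆ := e1.symm.trans e0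
  rw [hbbu6, hvu5, hu1bu5] at e2
  have hfin : ((15*c)*c) • u4 = (15*c) • p := by
    first
      | linear_combination (norm := module) e2
      | linear_combination (norm := module) (-1 : K) • e2
  have hpcu4 : p = c • u4 := by
    have h15c : (15*c) ≠ 0 := mul_ne_zero (by norm_num) hcne
    apply smul_right_injective 𝔤 h15c
    show (15*c) • p = (15*c) • (c • u4)
    rw [smul_smul]
    exact hfin.symm
  have e3 : ⁅A₁, p⁆ = c • ⁅A₁, u4⁆ := by rw [hpcu4, lie_smul]
  rw [hbp, hbu4'] at e3
  have e4 : (2*c^2 - 4*α*c - 16*α^2) • u3 = 0 := by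
    linear_combination (norm := module) e3
  have hscal : (2*c^2 - 4*α*c - 16*α^2) ≠ 0 := by
    have hh : 2*c^2 - 4*α*c - 16*α^2 = (8/25) * ((16*α + β) * (α + β)) := by
      rw [sc]; ring
    rw [hh]
    exact mul_ne_zero (by norm_num) (mul_ne_zero h16 hab)
  have hu3z : u3 = 0 := (smul_eq_zero.mp e4).resolve_left hscal
  have hu4z : u4 = 0 := by rw [su4, hu3z, lie_zero]
  have hu5z : u5 = 0 := by rw [su5, hu4z, lie_zero]
  have hu6z : u6 = 0 := by rw [su6, hu5z, lie_zero]
  have hbY0 : ⁅A₁, Y⁆ = 0 := by rw [hbY, hu5z, neg_zero]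
  have hu1Y0 : ⁅u1, Y⁆ = 0 := by rw [hu1Y, hu6z, neg_zero]
  have hu2Y : ⁅u2, Y⁆ = 0 := by
    have h := leibniz_lie A₀ u1 Y
    simp only [hu1Y0, hR6, lie_add, lie_sub, lie_smul, add_lie, sub_lie, smul_lie, lie_neg, neg_lie, lie_zero, zero_lie, lie_self, smul_zero, zero_smul, neg_zero, add_zero, zero_add, sub_zero, ← su1, ← su2, ← su3, ← su4, ← su5, ← su6, ← sv, ← sw, ← sp, ← sq] at h
    exact h.symm
  have hvY0 : ⁅v, Y⁆ = 0 := by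
    rw [hvY, hu6z, hu5z, lie_zero, lie_zero, neg_zero, add_zero]
  -- centrality of the three elements against generators
  have hYA0 : ⁅Y, A₀⁆ = 0 := by rw [← lie_skew, hR6, neg_zero]
  have hYA1 : ⁅Y, A₁⁆ = 0 := by rw [← lie_skew, hbY0, neg_zero]
  have hYY : ⁅Y, Y⁆ = 0 := lie_self Y
  have hZ0A0 : ⁅(-(4*α)) • A₀ + u2, A₀⁆ = 0 := by
    rw [add_lie, smul_lie, lie_self, smul_zero, zero_add, ← lie_skew, ← su3, hu3z, neg_zero]
  have hZ0A1 : ⁅(-(4*α)) • A₀ + u2, A₁⁆ = 0 := by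
    have h2 : ⁅u2, A₁⁆ = (4*α) • u1 := by
      rw [← lie_skew, hbu2]; module
    rw [add_lie, smul_lie, ← su1, h2]; module
  have hZ0Y : ⁅(-(4*α)) • A₀ + u2, Y⁆ = 0 := by
    rw [add_lie, smul_lie, hR6, smul_zero, zero_add, hu2Y]
  have hZ1A0 : ⁅(4*α) • A₁ + v, A₀⁆ = 0 := by
    have h1 : ⁅A₁, A₀⁆ = -u1 := by rw [su1, ← lie_skew]
    have h2 : ⁅v, A₀⁆ = (4*α) • u1 := by
      rw [← lie_skew, hav]; module
    rw [add_lie, smul_lie, h1, h2]; module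
  have hZ1A1 : ⁅(4*α) • A₁ + v, A₁⁆ = 0 := by
    have h2 : ⁅v, A₁⁆ = 0 := by rw [← lie_skew, hR1, neg_zero]
    rw [add_lie, smul_lie, lie_self, smul_zero, zero_add, h2]
  have hZ1Y : ⁅(4*α) • A₁ + v, Y⁆ = 0 := by
    rw [add_lie, smul_lie, hbY0, smul_zero, zero_add, hvY0]
  have hcent : ∀ Z : 𝔤, ⁅Z, A₀⁆ = 0 → ⁅Z, A₁⁆ = 0 → ⁅Z, Y⁆ = 0 →
      ∀ C ∈ LieSubalgebra.lieSpan K 𝔤 {A₀, A₁, Y}, ⁅Z, C⁆ = 0 := by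
    intro Z h0 h1 h2 C hC
    let S : LieSubalgebra K 𝔤 :=
      { carrier := {x | ⁅Z, x⁆ = 0}
        add_mem' := by
          intro x y hx hy
          simp only [Set.mem_setOf_eq] at *
          rw [lie_add, hx, hy, add_zero]
        zero_mem' := by simp
        smul_mem' := by
          intro t x hx
          simp only [Set.mem_setOf_eq] at *
          rw [lie_smul, hx, smul_zero]
        lie_mem' := by
          intro x y hx hy
          simp only [Set.mem_setOf_eq] at *
          rw [leibniz_lie, hx, hy, zero_lie, lie_zero, add_zero] }
    have hle : LieSubalgebra.lieSpan K 𝔤 {A₀, A₁, Y} ≤ S := by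
      rw [LieSubalgebra.lieSpan_le]
      intro x hx
      simp only [Set.mem_insert_iff, Set.mem_singleton_iff] at hx
      rcases hx with rfl | rfl | rfl
      · exact h0
      · exact h1
      · exact h2
    exact hle hC
  have m0 : A₀ ∈ LieSubalgebra.lieSpan K 𝔤 {A₀, A₁, Y} :=
    LieSubalgebra.subset_lieSpan (by simp)
  have m1 : A₁ ∈ LieSubalgebra.lieSpan K 𝔤 {A₀, A₁, Y} :=
    LieSubalgebra.subset_lieSpan (by simp)
  have mY : Y ∈ LieSubalgebra.lieSpan K 𝔤 {A₀, A₁, Y} :=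
    LieSubalgebra.subset_lieSpan (by simp)
  have mu1 : u1 ∈ LieSubalgebra.lieSpan K 𝔤 {A₀, A₁, Y} := by
    rw [su1]; exact (LieSubalgebra.lieSpan K 𝔤 {A₀, A₁, Y}).lie_mem m0 m1
  have mu2 : u2 ∈ LieSubalgebra.lieSpan K 𝔤 {A₀, A₁, Y} := by
    rw [su2]; exact (LieSubalgebra.lieSpan K 𝔤 {A₀, A₁, Y}).lie_mem m0 mu1
  have mv : v ∈ LieSubalgebra.lieSpan K 𝔤 {A₀, A₁, Y} := by
    rw [sv]; exact (LieSubalgebra.lieSpan K 𝔤 {A₀, A₁, Y}).lie_mem m1 mu1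
  refine ⟨mY, ?_, ?_, ?_⟩
  · exact (LieSubalgebra.lieSpan K 𝔤 {A₀, A₁, Y}).add_mem ((LieSubalgebra.lieSpan K 𝔤 {A₀, A₁, Y}).smul_mem _ m0) mu2
  · exact (LieSubalgebra.lieSpan K 𝔤 {A₀, A₁, Y}).add_mem ((LieSubalgebra.lieSpan K 𝔤 {A₀, A₁, Y}).smul_mem _ m1) mv
  · intro C hC
    exact ⟨hcent Y hYA0 hYA1 hYY C hC, hcent _ hZ0A0 hZ0A1 hZ0Y C hC,
      hcent _ hZ1A0 hZ1A1 hZ1Y C hC⟩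
end

section
/- Let 𝔤 be a Lie algebra over K, let A₀, A₁ ∈ 𝔤 and α ∈ K satisfy relations (R1), (R2) and additionally [A₀,[A₀,[A₀,A₁]]] = 0. Set E₁ = [A₀,A₁], E₂ = [A₀,[A₀,A₁]], E₃ = [A₁,[A₀,A₁]]. Then [E₂,E₁] = 4αE₂, [E₃,E₁] = −4αE₃, and [E₃,E₂] = 16α²E₁; in particular, the K-linear span of E₁, E₂, E₃ is a Lie subalgebra of 𝔤. -/
/-- If `A₀, A₁` in a Lie algebra over a field `K` of characteristic zero satisfy
(R1), (R2) and `[A₀,[A₀,[A₀,A₁]]] = 0`, and `E₁ = [A₀,A₁]`, `E₂ = [A₀,[A₀,A₁]]`,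
`E₃ = [A₁,[A₀,A₁]]`, then `[E₂,E₁] = 4αE₂`, `[E₃,E₁] = −4αE₃`, `[E₃,E₂] = 16α²E₁`;
in particular the span of `E₁, E₂, E₃` is a Lie subalgebra. -/
theorem stmt_17 {K : Type*} [Field K] [CharZero K]
    {𝔤 : Type*} [LieRing 𝔤] [LieAlgebra K 𝔤] (α : K) (A₀ A₁ : 𝔤)
    (hR1 : ⁅A₁, ⁅A₁, ⁅A₀, A₁⁆⁆⁆ = 0)
    (hR2 : (4 * α) • ⁅A₀, A₁⁆ + ⁅A₀, ⁅A₁, ⁅A₀, A₁⁆⁆⁆ = 0)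
    (h3 : ⁅A₀, ⁅A₀, ⁅A₀, A₁⁆⁆⁆ = 0) :
    ⁅⁅A₀, ⁅A₀, A₁⁆⁆, ⁅A₀, A₁⁆⁆ = (4 * α) • ⁅A₀, ⁅A₀, A₁⁆⁆ ∧
    ⁅⁅A₁, ⁅A₀, A₁⁆⁆, ⁅A₀, A₁⁆⁆ = (-(4 * α)) • ⁅A₁, ⁅A₀, A₁⁆⁆ ∧
    ⁅⁅A₁, ⁅A₀, A₁⁆⁆, ⁅A₀, ⁅A₀, A₁⁆⁆⁆ = (16 * α ^ 2) • ⁅A₀, A₁⁆ ∧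
    ∃ S : LieSubalgebra K 𝔤,
      S.toSubmodule
        = Submodule.span K {⁅A₀, A₁⁆, ⁅A₀, ⁅A₀, A₁⁆⁆, ⁅A₁, ⁅A₀, A₁⁆⁆} := by
  set E₁ := ⁅A₀, A₁⁆ with hE₁
  set E₂ := ⁅A₀, E₁⁆ with hE₂
  set E₃ := ⁅A₁, E₁⁆ with hE₃
  -- basic facts
  have h4 : ⁅A₀, E₃⁆ = (-(4 * α)) • E₁ := by
    rw [neg_smul]
    exact eq_neg_of_add_eq_zero_right hR2
  have hA1E2 : ⁅A₁, E₂⁆ = (-(4 * α)) • E₁ := by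
    rw [hE₂, leibniz_lie, ← lie_skew A₁ A₀, ← hE₁, neg_lie, lie_self, neg_zero, zero_add,
      ← hE₃, h4]
  have h1 : ⁅E₂, E₁⁆ = (4 * α) • E₂ := by
    have hE1E2 : ⁅E₁, E₂⁆ = (-(4 * α)) • E₂ := by
      rw [hE₁, lie_lie, hA1E2, h3, lie_zero, sub_zero, lie_smul, ← hE₂]
    rw [← lie_skew, hE1E2, neg_smul, neg_neg]
  have h2 : ⁅E₃, E₁⁆ = (-(4 * α)) • E₃ := by
    have hE1E3 : ⁅E₁, E₃⁆ = (4 * α) • E₃ := by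
      rw [hE₁, lie_lie, hR1, lie_zero, zero_sub, h4, lie_smul, ← hE₃,
        neg_smul, neg_neg]
    rw [← lie_skew, hE1E3, ← neg_smul]
  have h5 : ⁅E₃, E₂⁆ = (16 * α ^ 2) • E₁ := by
    have : ⁅E₃, E₂⁆ = ⁅E₃, ⁅A₀, E₁⁆⁆ := by rw [hE₂]
    rw [this, leibniz_lie, ← lie_skew E₃ A₀, h4, neg_lie, smul_lie,
      lie_self, smul_zero, neg_zero, zero_add, h2, lie_smul, h4, smul_smul]
    congr 1
    ring
  refine ⟨h1, h2, h5, ?_⟩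
  -- the span is a Lie subalgebra
  set p : Submodule K 𝔤 := Submodule.span K {E₁, E₂, E₃} with hp
  have m1 : E₁ ∈ p := Submodule.subset_span (by simp)
  have m2 : E₂ ∈ p := Submodule.subset_span (by simp)
  have m3 : E₃ ∈ p := Submodule.subset_span (by simp)
  have key : ∀ x ∈ p, ∀ y ∈ p, ⁅x, y⁆ ∈ p := by
    intro x hx
    induction hx using Submodule.span_induction with
    | mem x hx =>
      intro y hy
      induction hy using Submodule.span_induction with
      | mem y hy =>
        rcases hx with rfl | rfl | rfl <;> rcases hy with rfl | rfl | rfl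
        · simpa using p.zero_mem
        · rw [← lie_skew, h1]
          exact p.neg_mem (p.smul_mem _ m2)
        · rw [← lie_skew, h2]
          exact p.neg_mem (p.smul_mem _ m3)
        · rw [h1]; exact p.smul_mem _ m2
        · simpa using p.zero_mem
        · rw [← lie_skew, h5]
          exact p.neg_mem (p.smul_mem _ m1)
        · rw [h2]; exact p.smul_mem _ m3
        · rw [h5]; exact p.smul_mem _ m1
        · simpa using p.zero_mem
      | zero => simpa using p.zero_mem
      | add y z _ _ hy hz => rw [lie_add]; exact p.add_mem hy hz
      | smul c y _ hy => rw [lie_smul]; exact p.smul_mem c hy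
    | zero => intro y hy; simpa using p.zero_mem
    | add x z _ _ hx hz => intro y hy; rw [add_lie]; exact p.add_mem (hx y hy) (hz y hy)
    | smul c x _ hx => intro y hy; rw [smul_lie]; exact p.smul_mem c (hx y hy)
  exact ⟨{ toSubmodule := p, lie_mem' := fun {x y} hx hy => key x hx y hy }, rfl⟩
end

section
/- Let 𝔤 be a Lie algebra over K, let A₀, A₁, Y ∈ 𝔤 and α, β ∈ K satisfy relations (R1)–(R6), and assume (α+β)(6α+β)(16α+β) ≠ 0. Then the Lie subalgebra of 𝔤 generated by {A₀, A₁, Y} equals the K-linear span of the six elements A₀, A₁, Y, [A₀,A₁], [A₀,[A₀,A₁]], [A₁,[A₀,A₁]]; in particular, this subalgebra has dimension at most 6. -/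
/-!
Write `Eₙ = (ad A₀)ⁿ A₁`, `D = ⁅A₁, E₁⁆` and `F = ⁅A₁, E₃⁆`. The Jacobi identity together with (R2)
and (R4) makes `⁅A₀, F⁆`, `⁅E₁, E₃⁆` and `⁅A₁, E₄⁆` multiples of `E₃`; adding (R3), the bracket
`⁅E₁, ⁅E₁, E₄⁆⁆` becomes a combination of `E₄` and `⁅E₁, E₄⁆`. Computing the same bracket a second
time through `Y`, by (R1), (R5) and (R6), gives a combination that differs from the first by
`2(6α + β)⁅E₁, E₄⁆`. Hence `⁅E₁, E₄⁆ = 0`, then `(α + β)(16α + β)E₄ = 0` and `(α + β)E₃ = 0`.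
Once `E₃ = 0`, `Y` commutes with `A₀` and `A₁`, and bracketing `A₀` or `A₁` with
`E₁, E₂, D` stays in the span of the six elements, which is therefore a Lie subalgebra.
-/

namespace LieSubalgebra

variable {R L : Type*} [CommRing R] [LieRing L] [LieAlgebra R L] {s t : Set L}

open Submodule

theorem lie_mem_span_of_mem_lieSpan (hlie : ∀ x ∈ s, ∀ y ∈ t, ⁅x, y⁆ ∈ span R t) {x y : L}
    (hx : x ∈ lieSpan R L s) (hy : y ∈ span R t) : ⁅x, y⁆ ∈ span R t := by
  induction hx using lieSpan_induction generalizing y with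
  | mem x hx =>
    induction hy using span_induction with
    | mem y hy => exact hlie x hx y hy
    | zero => simp
    | add y z _ _ hy hz => simpa using add_mem hy hz
    | smul r y _ hy => simpa using smul_mem _ r hy
  | zero => simp
  | add x z _ _ hx hz => simpa using add_mem (hx hy) (hz hy)
  | smul r x _ hx => simpa using smul_mem _ r (hx hy)
  | lie x z _ _ hx hz => simpa [lie_lie] using sub_mem (hx (hz hy)) (hz (hx hy))

theorem lieSpan_toSubmodule_eq_span (hst : s ⊆ t) (hts : t ⊆ lieSpan R L s)
    (hlie : ∀ x ∈ s, ∀ y ∈ t, ⁅x, y⁆ ∈ span R t) :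
    (lieSpan R L s).toSubmodule = span R t := by
  refine le_antisymm ?_ (span_le.mpr hts)
  change _ ≤ ({ span R t with
    lie_mem' := fun hx hy ↦ lie_mem_span_of_mem_lieSpan hlie (span_le.mpr hts hx) hy } :
      LieSubalgebra R L)
  exact lieSpan_le.mpr (hst.trans subset_span)

end LieSubalgebra

theorem lie_lie_eq_zero_of_lie_eq_zero {L : Type*} [LieRing L] {x y z : L} (hy : ⁅x, y⁆ = 0)
    (hz : ⁅x, z⁆ = 0) : ⁅x, ⁅y, z⁆⁆ = 0 := by
  rw [leibniz_lie, hy, hz, zero_lie, lie_zero, add_zero]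

namespace LieRelations

open LieSubalgebra Submodule

variable {L : Type*} [LieRing L] {A₀ A₁ Y : L}

local notation "E₁" => ⁅A₀, A₁⁆
local notation "E₂" => ⁅A₀, E₁⁆
local notation "E₃" => ⁅A₀, E₂⁆
local notation "E₄" => ⁅A₀, E₃⁆
local notation "E₅" => ⁅A₀, E₄⁆
local notation "E₆" => ⁅A₀, E₅⁆
local notation "D" => ⁅A₁, E₁⁆
local notation "F" => ⁅A₁, E₃⁆

section CommRing

variable {K : Type*} [CommRing K] [LieAlgebra K L] {α : K}

theorem lie_A₀_D (hR2 : (4 * α) • E₁ + ⁅A₀, D⁆ = 0) : ⁅A₀, D⁆ = -(4 * α) • E₁ := by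
  linear_combination (norm := module) hR2

theorem lie_A₁_E₂ (hR2 : (4 * α) • E₁ + ⁅A₀, D⁆ = 0) : ⁅A₁, E₂⁆ = -(4 * α) • E₁ := by
  linear_combination (norm := module) hR2 - leibniz_lie A₀ A₁ E₁ - lie_self E₁

theorem lie_E₁_E₂ (hR2 : (4 * α) • E₁ + ⁅A₀, D⁆ = 0) : ⁅E₁, E₂⁆ = -F - (4 * α) • E₂ := by
  have h : ⁅A₀, ⁅A₁, E₂⁆⁆ = -(4 * α) • E₂ := by rw [lie_A₁_E₂ hR2, lie_smul]
  linear_combination (norm := module) h - leibniz_lie A₀ A₁ E₂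

theorem lie_E₁_E₃_add_lie_A₀_F (hR2 : (4 * α) • E₁ + ⁅A₀, D⁆ = 0) :
    ⁅E₁, E₃⁆ + ⁅A₀, F⁆ = -(4 * α) • E₃ := by
  have h : ⁅A₀, ⁅E₁, E₂⁆⁆ = -⁅A₀, F⁆ - (4 * α) • E₃ := by
    rw [lie_E₁_E₂ hR2, lie_sub, lie_neg, lie_smul]
  linear_combination (norm := module) h - leibniz_lie A₀ E₁ E₂ - lie_self E₂

theorem lieSpan_eq_span_of_E₃_eq_zero (hR1 : ⁅A₁, D⁆ = 0) (hR2 : (4 * α) • E₁ + ⁅A₀, D⁆ = 0)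
    (hR6 : ⁅A₀, Y⁆ = 0) (hA₁Y : ⁅A₁, Y⁆ = 0) (hE₃ : E₃ = 0) :
    (lieSpan K L {A₀, A₁, Y}).toSubmodule = span K {A₀, A₁, Y, E₁, E₂, D} := by
  have hA₁A₀ : ⁅A₁, A₀⁆ = -E₁ := (lie_skew A₁ A₀).symm
  have hYA₀ : ⁅Y, A₀⁆ = 0 := by rw [← lie_skew, hR6, neg_zero]
  have hYA₁ : ⁅Y, A₁⁆ = 0 := by rw [← lie_skew, hA₁Y, neg_zero]
  have hYE₁ := lie_lie_eq_zero_of_lie_eq_zero hYA₀ hYA₁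
  have hA₀ : A₀ ∈ lieSpan K L {A₀, A₁, Y} := subset_lieSpan (by simp)
  have hA₁ : A₁ ∈ lieSpan K L {A₀, A₁, Y} := subset_lieSpan (by simp)
  have hY : Y ∈ lieSpan K L {A₀, A₁, Y} := subset_lieSpan (by simp)
  refine lieSpan_toSubmodule_eq_span (by simp [Set.insert_subset_iff]) ?_ ?_
  · simp only [Set.insert_subset_iff, Set.singleton_subset_iff, SetLike.mem_coe]
    exact ⟨hA₀, hA₁, hY, lie_mem _ hA₀ hA₁, lie_mem _ hA₀ (lie_mem _ hA₀ hA₁),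
      lie_mem _ hA₁ (lie_mem _ hA₀ hA₁)⟩
  · simp only [Set.mem_insert_iff, Set.mem_singleton_iff, forall_eq_or_imp, forall_eq, lie_self,
      hA₁A₀, hR1, lie_A₀_D hR2, lie_A₁_E₂ hR2, hR6, hA₁Y, hE₃, hYA₀, hYA₁, hYE₁,
      lie_lie_eq_zero_of_lie_eq_zero hYA₀ hYE₁, lie_lie_eq_zero_of_lie_eq_zero hYA₁ hYE₁]
    simp [smul_mem, mem_span_of_mem, -lie_skew]

end CommRing

section CharZero

variable {K : Type*} [Field K] [CharZero K] [LieAlgebra K L] {α β : K}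

theorem lie_A₀_F (hR2 : (4 * α) • E₁ + ⁅A₀, D⁆ = 0)
    (hR4 : ⁅A₁, E₄⁆ - β • E₃ + ((1 : K) / 2) • ⁅A₀, F⁆ = 0) :
    ⁅A₀, F⁆ = (2 / 5 * (β - 4 * α)) • E₃ := by
  linear_combination (norm := module) (2 / 5 : K) •
    (lie_E₁_E₃_add_lie_A₀_F hR2 + leibniz_lie A₀ A₁ E₃ + hR4)

theorem lie_E₁_E₃ (hR2 : (4 * α) • E₁ + ⁅A₀, D⁆ = 0)
    (hR4 : ⁅A₁, E₄⁆ - β • E₃ + ((1 : K) / 2) • ⁅A₀, F⁆ = 0) :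
    ⁅E₁, E₃⁆ = -(2 / 5 * (6 * α + β)) • E₃ := by
  linear_combination (norm := module) lie_E₁_E₃_add_lie_A₀_F hR2 - lie_A₀_F hR2 hR4

theorem lie_A₁_E₄ (hR2 : (4 * α) • E₁ + ⁅A₀, D⁆ = 0)
    (hR4 : ⁅A₁, E₄⁆ - β • E₃ + ((1 : K) / 2) • ⁅A₀, F⁆ = 0) :
    ⁅A₁, E₄⁆ = (4 / 5 * (α + β)) • E₃ := by
  linear_combination (norm := module)
    -leibniz_lie A₀ A₁ E₃ + lie_A₀_F hR2 hR4 - lie_E₁_E₃ hR2 hR4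

theorem lie_E₁_F (hR2 : (4 * α) • E₁ + ⁅A₀, D⁆ = 0) (hR3 : ⁅A₁, F⁆ = 0)
    (hR4 : ⁅A₁, E₄⁆ - β • E₃ + ((1 : K) / 2) • ⁅A₀, F⁆ = 0) :
    ⁅E₁, F⁆ = -(2 / 5 * (β - 4 * α)) • F := by
  have h₀ : ⁅A₀, ⁅A₁, F⁆⁆ = 0 := by rw [hR3, lie_zero]
  have h₁ : ⁅A₁, ⁅A₀, F⁆⁆ = (2 / 5 * (β - 4 * α)) • F := by rw [lie_A₀_F hR2 hR4, lie_smul]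
  linear_combination (norm := module) h₀ - leibniz_lie A₀ A₁ F - h₁

theorem lie_E₂_F (hR2 : (4 * α) • E₁ + ⁅A₀, D⁆ = 0) (hR3 : ⁅A₁, F⁆ = 0)
    (hR4 : ⁅A₁, E₄⁆ - β • E₃ + ((1 : K) / 2) • ⁅A₀, F⁆ = 0) :
    ⁅E₂, F⁆ = (4 * α * (2 / 5 * (β - 4 * α))) • E₃ := by
  have h₀ : ⁅A₀, ⁅E₁, F⁆⁆ = -(2 / 5 * (β - 4 * α)) • ⁅A₀, F⁆ := by
    rw [lie_E₁_F hR2 hR3 hR4, lie_smul]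
  have h₁ : ⁅E₁, ⁅A₀, F⁆⁆ = (2 / 5 * (β - 4 * α)) • ⁅E₁, E₃⁆ := by
    rw [lie_A₀_F hR2 hR4, lie_smul]
  linear_combination (norm := module) h₀ - leibniz_lie A₀ E₁ F - h₁
    - (2 / 5 * (β - 4 * α)) • lie_A₀_F hR2 hR4 - (2 / 5 * (β - 4 * α)) • lie_E₁_E₃ hR2 hR4

theorem lie_E₂_E₃ (hR2 : (4 * α) • E₁ + ⁅A₀, D⁆ = 0)
    (hR4 : ⁅A₁, E₄⁆ - β • E₃ + ((1 : K) / 2) • ⁅A₀, F⁆ = 0) :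
    ⁅E₂, E₃⁆ = -(2 / 5 * (6 * α + β)) • E₄ - ⁅E₁, E₄⁆ := by
  have h : ⁅A₀, ⁅E₁, E₃⁆⁆ = -(2 / 5 * (6 * α + β)) • E₄ := by rw [lie_E₁_E₃ hR2 hR4, lie_smul]
  linear_combination (norm := module) h - leibniz_lie A₀ E₁ E₃

theorem lie_F_E₃ (hR2 : (4 * α) • E₁ + ⁅A₀, D⁆ = 0) (hR3 : ⁅A₁, F⁆ = 0)
    (hR4 : ⁅A₁, E₄⁆ - β • E₃ + ((1 : K) / 2) • ⁅A₀, F⁆ = 0) :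
    ⁅F, E₃⁆ = -(2 / 5 * (β - 4 * α) * (2 / 5 * (16 * α + β))) • E₄
      - (2 / 5 * (β - 4 * α)) • ⁅E₁, E₄⁆ := by
  have h₀ : ⁅A₀, ⁅E₂, F⁆⁆ = (4 * α * (2 / 5 * (β - 4 * α))) • E₄ := by
    rw [lie_E₂_F hR2 hR3 hR4, lie_smul]
  have h₁ : ⁅E₂, ⁅A₀, F⁆⁆ = (2 / 5 * (β - 4 * α)) • ⁅E₂, E₃⁆ := by
    rw [lie_A₀_F hR2 hR4, lie_smul]
  linear_combination (norm := module) -h₀ + leibniz_lie A₀ E₂ F + h₁ - lie_skew F E₃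
    + (2 / 5 * (β - 4 * α)) • lie_E₂_E₃ hR2 hR4

theorem lie_E₁_lie_E₁_E₄_of_R3 (hR2 : (4 * α) • E₁ + ⁅A₀, D⁆ = 0) (hR3 : ⁅A₁, F⁆ = 0)
    (hR4 : ⁅A₁, E₄⁆ - β • E₃ + ((1 : K) / 2) • ⁅A₀, F⁆ = 0) :
    ⁅E₁, ⁅E₁, E₄⁆⁆ = -(4 / 5 * (α + β) * (2 / 5 * (16 * α + β))) • E₄
      - (4 / 5 * (α + β) + 2 / 5 * (16 * α + β)) • ⁅E₁, E₄⁆ := by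
  have h₀ : ⁅E₁, ⁅E₂, E₃⁆⁆ = -(2 / 5 * (6 * α + β)) • ⁅E₁, E₄⁆ - ⁅E₁, ⁅E₁, E₄⁆⁆ := by
    rw [lie_E₂_E₃ hR2 hR4, lie_sub, lie_smul]
  have h₁ : ⁅⁅E₁, E₂⁆, E₃⁆ = -⁅F, E₃⁆ - (4 * α) • ⁅E₂, E₃⁆ := by
    rw [lie_E₁_E₂ hR2, sub_lie, neg_lie, smul_lie]
  have h₂ : ⁅E₂, ⁅E₁, E₃⁆⁆ = -(2 / 5 * (6 * α + β)) • ⁅E₂, E₃⁆ := by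
    rw [lie_E₁_E₃ hR2 hR4, lie_smul]
  linear_combination (norm := module) h₀ - leibniz_lie E₁ E₂ E₃ - h₁ - h₂
    + lie_F_E₃ hR2 hR3 hR4 + (4 * α + 2 / 5 * (6 * α + β)) • lie_E₂_E₃ hR2 hR4

theorem lie_D_E₃ (hR2 : (4 * α) • E₁ + ⁅A₀, D⁆ = 0) (hR3 : ⁅A₁, F⁆ = 0)
    (hR4 : ⁅A₁, E₄⁆ - β • E₃ + ((1 : K) / 2) • ⁅A₀, F⁆ = 0) :
    ⁅D, E₃⁆ = -(4 * α) • F := by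
  have h : ⁅A₁, ⁅E₁, E₃⁆⁆ = -(2 / 5 * (6 * α + β)) • F := by rw [lie_E₁_E₃ hR2 hR4, lie_smul]
  linear_combination (norm := module) h - leibniz_lie A₁ E₁ E₃ - lie_E₁_F hR2 hR3 hR4

theorem lie_D_E₄ (hR2 : (4 * α) • E₁ + ⁅A₀, D⁆ = 0) (hR3 : ⁅A₁, F⁆ = 0)
    (hR4 : ⁅A₁, E₄⁆ - β • E₃ + ((1 : K) / 2) • ⁅A₀, F⁆ = 0) :
    ⁅D, E₄⁆ = -(4 * α * (4 / 5 * (α + β))) • E₃ := by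
  have h₀ : ⁅A₀, ⁅D, E₃⁆⁆ = -(4 * α) • ⁅A₀, F⁆ := by rw [lie_D_E₃ hR2 hR3 hR4, lie_smul]
  have h₁ : ⁅⁅A₀, D⁆, E₃⁆ = -(4 * α) • ⁅E₁, E₃⁆ := by rw [lie_A₀_D hR2, smul_lie]
  linear_combination (norm := module) h₀ - leibniz_lie A₀ D E₃ - h₁
    - (4 * α) • lie_A₀_F hR2 hR4 + (4 * α) • lie_E₁_E₃ hR2 hR4

theorem lie_D_E₅ (hR2 : (4 * α) • E₁ + ⁅A₀, D⁆ = 0) (hR3 : ⁅A₁, F⁆ = 0)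
    (hR4 : ⁅A₁, E₄⁆ - β • E₃ + ((1 : K) / 2) • ⁅A₀, F⁆ = 0) :
    ⁅D, E₅⁆ = (4 * α) • ⁅E₁, E₄⁆ - (4 * α * (4 / 5 * (α + β))) • E₄ := by
  have h₀ : ⁅A₀, ⁅D, E₄⁆⁆ = -(4 * α * (4 / 5 * (α + β))) • E₄ := by
    rw [lie_D_E₄ hR2 hR3 hR4, lie_smul]
  have h₁ : ⁅⁅A₀, D⁆, E₄⁆ = -(4 * α) • ⁅E₁, E₄⁆ := by rw [lie_A₀_D hR2, smul_lie]
  linear_combination (norm := module) h₀ - leibniz_lie A₀ D E₄ - h₁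

theorem lie_A₁_E₅ (hR2 : (4 * α) • E₁ + ⁅A₀, D⁆ = 0)
    (hR4 : ⁅A₁, E₄⁆ - β • E₃ + ((1 : K) / 2) • ⁅A₀, F⁆ = 0) :
    ⁅A₁, E₅⁆ = (4 / 5 * (α + β)) • E₄ - ⁅E₁, E₄⁆ := by
  have h : ⁅A₀, ⁅A₁, E₄⁆⁆ = (4 / 5 * (α + β)) • E₄ := by rw [lie_A₁_E₄ hR2 hR4, lie_smul]
  linear_combination (norm := module) h - leibniz_lie A₀ A₁ E₄

theorem lie_A₁_E₆ (hR2 : (4 * α) • E₁ + ⁅A₀, D⁆ = 0)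
    (hR4 : ⁅A₁, E₄⁆ - β • E₃ + ((1 : K) / 2) • ⁅A₀, F⁆ = 0) :
    ⁅A₁, E₆⁆ = (4 / 5 * (α + β)) • E₅ - ⁅E₂, E₄⁆ - (2 : K) • ⁅E₁, E₅⁆ := by
  have h : ⁅A₀, ⁅A₁, E₅⁆⁆ = (4 / 5 * (α + β)) • E₅ - ⁅A₀, ⁅E₁, E₄⁆⁆ := by
    rw [lie_A₁_E₅ hR2 hR4, lie_sub, lie_smul]
  linear_combination (norm := module) h - leibniz_lie A₀ A₁ E₅ - leibniz_lie A₀ E₁ E₄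

theorem lie_D_Y (hR2 : (4 * α) • E₁ + ⁅A₀, D⁆ = 0)
    (hR4 : ⁅A₁, E₄⁆ - β • E₃ + ((1 : K) / 2) • ⁅A₀, F⁆ = 0)
    (hR5 : ⁅A₁, Y⁆ + E₅ = 0) (hR6 : ⁅A₀, Y⁆ = 0) :
    ⁅D, Y⁆ = (3 : K) • ⁅E₁, E₅⁆ - (4 / 5 * (α + β)) • E₅ + ⁅E₂, E₄⁆ := by
  have hA₁Y : ⁅A₁, Y⁆ = -E₅ := eq_neg_of_add_eq_zero_left hR5
  have hE₁Y : ⁅E₁, Y⁆ = -E₆ := by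
    have h₀ : ⁅A₀, ⁅A₁, Y⁆⁆ = -E₆ := by rw [hA₁Y, lie_neg]
    have h₁ : ⁅A₁, ⁅A₀, Y⁆⁆ = 0 := by rw [hR6, lie_zero]
    linear_combination (norm := module) h₀ - leibniz_lie A₀ A₁ Y - h₁
  have h₀ : ⁅A₁, ⁅E₁, Y⁆⁆ = -⁅A₁, E₆⁆ := by rw [hE₁Y, lie_neg]
  have h₁ : ⁅E₁, ⁅A₁, Y⁆⁆ = -⁅E₁, E₅⁆ := by rw [hA₁Y, lie_neg]
  linear_combination (norm := module) h₀ - leibniz_lie A₁ E₁ Y - h₁ - lie_A₁_E₆ hR2 hR4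

theorem lie_E₁_lie_E₁_E₄_of_R5 (hR1 : ⁅A₁, D⁆ = 0) (hR2 : (4 * α) • E₁ + ⁅A₀, D⁆ = 0)
    (hR3 : ⁅A₁, F⁆ = 0) (hR4 : ⁅A₁, E₄⁆ - β • E₃ + ((1 : K) / 2) • ⁅A₀, F⁆ = 0)
    (hR5 : ⁅A₁, Y⁆ + E₅ = 0) (hR6 : ⁅A₀, Y⁆ = 0) :
    ⁅E₁, ⁅E₁, E₄⁆⁆ = -(4 / 5 * (α + β) * (2 / 5 * (16 * α + β))) • E₄
      + (4 / 5 * (α + β) + 4 * α) • ⁅E₁, E₄⁆ := by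
  have h₀ : ⁅A₁, ⁅D, Y⁆⁆ = (3 : K) • ⁅A₁, ⁅E₁, E₅⁆⁆ - (4 / 5 * (α + β)) • ⁅A₁, E₅⁆
      + ⁅A₁, ⁅E₂, E₄⁆⁆ := by
    rw [lie_D_Y hR2 hR4 hR5 hR6, lie_add, lie_sub, lie_smul, lie_smul]
  have h₁ : ⁅⁅A₁, D⁆, Y⁆ = 0 := by rw [hR1, zero_lie]
  have h₂ : ⁅D, ⁅A₁, Y⁆⁆ = -⁅D, E₅⁆ := by rw [eq_neg_of_add_eq_zero_left hR5, lie_neg]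
  have h₃ : ⁅E₁, ⁅A₁, E₅⁆⁆ = (4 / 5 * (α + β)) • ⁅E₁, E₄⁆ - ⁅E₁, ⁅E₁, E₄⁆⁆ := by
    rw [lie_A₁_E₅ hR2 hR4, lie_sub, lie_smul]
  have h₄ : ⁅⁅A₁, E₂⁆, E₄⁆ = -(4 * α) • ⁅E₁, E₄⁆ := by rw [lie_A₁_E₂ hR2, smul_lie]
  have h₅ : ⁅E₂, ⁅A₁, E₄⁆⁆ = (4 / 5 * (α + β)) • ⁅E₂, E₃⁆ := by
    rw [lie_A₁_E₄ hR2 hR4, lie_smul]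
  linear_combination (norm := module) h₃ + leibniz_lie A₁ E₁ E₅ + (1 / 3 : K) •
    (h₀ - leibniz_lie A₁ D Y - h₁ - h₂ + leibniz_lie A₁ E₂ E₄ + h₄ + h₅
      - (4 / 5 * (α + β)) • lie_A₁_E₅ hR2 hR4 + (4 / 5 * (α + β)) • lie_E₂_E₃ hR2 hR4
      + (4 : K) • lie_D_E₅ hR2 hR3 hR4)

theorem E₃_eq_zero (hR1 : ⁅A₁, D⁆ = 0) (hR2 : (4 * α) • E₁ + ⁅A₀, D⁆ = 0)
    (hR3 : ⁅A₁, F⁆ = 0) (hR4 : ⁅A₁, E₄⁆ - β • E₃ + ((1 : K) / 2) • ⁅A₀, F⁆ = 0)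
    (hR5 : ⁅A₁, Y⁆ + E₅ = 0) (hR6 : ⁅A₀, Y⁆ = 0)
    (hne : (α + β) * (6 * α + β) * (16 * α + β) ≠ 0) :
    E₃ = 0 := by
  have h₁ : α + β ≠ 0 := left_ne_zero_of_mul (left_ne_zero_of_mul hne)
  have h₆ : 6 * α + β ≠ 0 := right_ne_zero_of_mul (left_ne_zero_of_mul hne)
  have h₁₆ : 16 * α + β ≠ 0 := right_ne_zero_of_mul hne
  have hE₁E₄ : ⁅E₁, E₄⁆ = 0 := by
    have h : (2 * (6 * α + β)) • ⁅E₁, E₄⁆ = 0 := by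
      linear_combination (norm := module) lie_E₁_lie_E₁_E₄_of_R3 hR2 hR3 hR4
        - lie_E₁_lie_E₁_E₄_of_R5 hR1 hR2 hR3 hR4 hR5 hR6
    exact (smul_eq_zero_iff_right (mul_ne_zero two_ne_zero h₆)).mp h
  have hE₄ : E₄ = 0 := by
    have h := lie_E₁_lie_E₁_E₄_of_R3 hR2 hR3 hR4
    rw [hE₁E₄, lie_zero, smul_zero, sub_zero, eq_comm, neg_smul, neg_eq_zero] at h
    exact (smul_eq_zero_iff_right (by simp [h₁, h₁₆])).mp h
  have h : (4 / 5 * (α + β)) • E₃ = 0 := by rw [← lie_A₁_E₄ hR2 hR4, hE₄, lie_zero]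
  exact (smul_eq_zero_iff_right (by simp [h₁])).mp h

end CharZero

end LieRelations

/-- If `A₀, A₁, Y` in a Lie algebra over a field `K` of characteristic zero
satisfy relations (R1)–(R6) and `(α+β)(6α+β)(16α+β) ≠ 0`, then the Lie subalgebra generated
by `{A₀, A₁, Y}` equals the linear span of the six elements
`A₀, A₁, Y, [A₀,A₁], [A₀,[A₀,A₁]], [A₁,[A₀,A₁]]`; in particular it has dimension at most 6. -/
theorem stmt_18 {K : Type*} [Field K] [CharZero K]
    {𝔤 : Type*} [LieRing 𝔤] [LieAlgebra K 𝔤] (α β : K) (A₀ A₁ Y : 𝔤)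
    (hR1 : ⁅A₁, ⁅A₁, ⁅A₀, A₁⁆⁆⁆ = 0)
    (hR2 : (4 * α) • ⁅A₀, A₁⁆ + ⁅A₀, ⁅A₁, ⁅A₀, A₁⁆⁆⁆ = 0)
    (hR3 : ⁅A₁, ⁅A₁, ⁅A₀, ⁅A₀, ⁅A₀, A₁⁆⁆⁆⁆⁆ = 0)
    (hR4 : ⁅A₁, ⁅A₀, ⁅A₀, ⁅A₀, ⁅A₀, A₁⁆⁆⁆⁆⁆ - β • ⁅A₀, ⁅A₀, ⁅A₀, A₁⁆⁆⁆
        + ((1 : K) / 2) • ⁅A₀, ⁅A₁, ⁅A₀, ⁅A₀, ⁅A₀, A₁⁆⁆⁆⁆⁆ = 0)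
    (hR5 : ⁅A₁, Y⁆ + ⁅A₀, ⁅A₀, ⁅A₀, ⁅A₀, ⁅A₀, A₁⁆⁆⁆⁆⁆ = 0)
    (hR6 : ⁅A₀, Y⁆ = 0)
    (hne : (α + β) * (6 * α + β) * (16 * α + β) ≠ 0) :
    (LieSubalgebra.lieSpan K 𝔤 {A₀, A₁, Y}).toSubmodule
      = Submodule.span K
          {A₀, A₁, Y, ⁅A₀, A₁⁆, ⁅A₀, ⁅A₀, A₁⁆⁆, ⁅A₁, ⁅A₀, A₁⁆⁆} ∧
    Module.rank K (LieSubalgebra.lieSpan K 𝔤 {A₀, A₁, Y}) ≤ 6 := by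
  have hE₃ := LieRelations.E₃_eq_zero hR1 hR2 hR3 hR4 hR5 hR6 hne
  have hA₁Y : ⁅A₁, Y⁆ = 0 := by
    rw [eq_neg_of_add_eq_zero_left hR5, hE₃, lie_zero, lie_zero, neg_zero]
  have hspan := LieRelations.lieSpan_eq_span_of_E₃_eq_zero hR1 hR2 hR6 hA₁Y hE₃
  refine ⟨hspan, ?_⟩
  classical
  have hrank := rank_span_finset_le (R := K)
    ({A₀, A₁, Y, ⁅A₀, A₁⁆, ⁅A₀, ⁅A₀, A₁⁆⁆, ⁅A₁, ⁅A₀, A₁⁆⁆} : Finset 𝔤)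
  rw [Finset.coe_insert, Finset.coe_insert, Finset.coe_insert, Finset.coe_insert, Finset.coe_insert,
    Finset.coe_singleton, ← hspan] at hrank
  exact hrank.trans (by exact_mod_cast Finset.card_le_six)
end

section
/- Let K be a field of characteristic zero and α, β ∈ K. In the Lie algebra of K-linear derivations of the polynomial ring K[w] (with bracket the commutator of derivations), the elements A₀ = −2αw²(d/dw), A₁ = −(d/dw), and Y = 0 satisfy relations (R1)–(R6). Moreover, for α ≠ 0, the Lie subalgebra generated by A₀ and A₁ is the 3-dimensional span of d/dw, w(d/dw), w²(d/dw), which is isomorphic to sl₂(K). -/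
/-!
Write `∂ = d/dw`. Brackets of polynomial vector fields are `[p ∂, q ∂] = (p q' - q p') ∂`, so the
quadratic fields `(c₀ + c₁ w + c₂ w²) ∂` are closed under the bracket: they are the image of the
infinitesimal Möbius action `M ↦ (M₀₁ + (M₁₁ - M₀₀) w - M₁₀ w²) ∂` of `sl₂(K)`, which is an
injective Lie algebra map. `A₀` and `A₁` lie in this image, and conversely `-A₁ = ∂`,
`A₀ / (-2α) = w² ∂` and `[∂, w² ∂] / 2 = w ∂` lie in the Lie algebra they generate when `α ≠ 0`.
The relations are a direct computation; `ad_{A₀}` raises the degree of the coefficient by one and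
kills `w² ∂`, so `ad_{A₀}³ A₁ = 0`, which makes (R3)–(R5) immediate.
-/

open LieAlgebra.SpecialLinear

namespace Polynomial

section CommRing

variable {R : Type*} [CommRing R]

local notation "𝔡" => (derivative' : Derivation R R[X] R[X])

theorem smul_derivative'_injective : Function.Injective fun p : R[X] ↦ p • 𝔡 :=
  fun p q h ↦ by simpa using congrArg (fun D : Derivation R R[X] R[X] ↦ D X) h

theorem lie_smul_derivative' (p q : R[X]) :
    ⁅p • 𝔡, q • 𝔡⁆ = (p * derivative q - q * derivative p) • 𝔡 := by
  apply derivation_ext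
  simp [Derivation.commutator_apply]

theorem lie_derivative'_smul (q : R[X]) : ⁅𝔡, q • 𝔡⁆ = derivative q • 𝔡 := by
  apply derivation_ext
  simp [Derivation.commutator_apply]

theorem smul_smul_derivative' (a : R) (p : R[X]) : a • p • 𝔡 = (C a * p) • 𝔡 := by
  rw [← smul_eq_C_mul, smul_assoc]

variable (R) in
/-- The infinitesimal action of `sl₂` on the line by Möbius transformations. -/
noncomputable def moebiusDerivation : sl (Fin 2) R →ₗ⁅R⁆ Derivation R R[X] R[X] where
  toFun M := (C (M.1 0 1) + C (M.1 1 1 - M.1 0 0) * X - C (M.1 1 0) * X ^ 2) • 𝔡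
  map_add' M N := by
    rw [← add_smul]
    congr 1
    simp only [AddMemClass.coe_add, Matrix.add_apply, map_add, map_sub]
    ring
  map_smul' c M := by
    rw [RingHom.id_apply, smul_smul_derivative']
    congr 1
    simp only [SetLike.val_smul, Matrix.smul_apply, smul_eq_mul, map_mul, map_sub]
    ring
  map_lie' {M N} := by
    rw [lie_smul_derivative']
    congr 1
    simp only [sl_bracket, Matrix.sub_apply, Matrix.mul_apply, Fin.sum_univ_two, map_add, map_sub,
      map_mul, derivative_mul, derivative_C, derivative_X, derivative_X_pow, map_ofNat,
      Nat.cast_ofNat]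
    ring

theorem moebiusDerivation_apply (M : sl (Fin 2) R) :
    moebiusDerivation R M =
      (C (M.1 0 1) + C (M.1 1 1 - M.1 0 0) * X - C (M.1 1 0) * X ^ 2) • 𝔡 :=
  rfl

theorem moebiusDerivation_injective [IsAddTorsionFree R] :
    Function.Injective (moebiusDerivation R) := by
  rw [injective_iff_map_eq_zero]
  intro M hM
  rw [moebiusDerivation_apply, ← zero_smul R[X] 𝔡] at hM
  have hp := smul_derivative'_injective hM
  have h01 : M.1 0 1 = 0 := by simpa using congrArg (coeff · 0) hp
  have h10 : M.1 1 0 = 0 := by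
    simpa [coeff_X, coeff_C, coeff_X_pow] using congrArg (coeff · 2) hp
  have hdiag : M.1 1 1 - M.1 0 0 = 0 := by
    simpa [coeff_X, coeff_C] using congrArg (coeff · 1) hp
  have htr : Matrix.trace M.1 = 0 := M.2
  simp only [Matrix.trace, Fin.sum_univ_two, Matrix.diag_apply] at htr
  have h00 : M.1 0 0 = 0 :=
    two_nsmul_eq_zero.mp (by rw [two_nsmul]; linear_combination htr - hdiag)
  have h11 : M.1 1 1 = 0 := by linear_combination hdiag + h00
  ext i j
  fin_cases i <;> fin_cases j <;> simp [h00, h01, h10, h11]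

theorem range_moebiusDerivation_le_span :
    (moebiusDerivation R).range.toSubmodule ≤
      Submodule.span R {𝔡, (X : R[X]) • 𝔡, (X ^ 2 : R[X]) • 𝔡} := by
  intro x hx
  obtain ⟨M, rfl⟩ := (LieHom.mem_range _ _).mp hx
  have h : moebiusDerivation R M =
      M.1 0 1 • 𝔡 + (M.1 1 1 - M.1 0 0) • (X : R[X]) • 𝔡 - M.1 1 0 • (X ^ 2 : R[X]) • 𝔡 := by
    rw [moebiusDerivation_apply, smul_smul_derivative', smul_smul_derivative',
      ← one_smul R[X] 𝔡, smul_smul_derivative', one_smul, mul_one, ← add_smul, ← sub_smul]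
  rw [h]
  refine sub_mem (add_mem ?_ ?_) ?_ <;>
    exact Submodule.smul_mem _ _ (Submodule.subset_span (by simp))

theorem lieSpan_le_range_moebiusDerivation (a : R) :
    LieSubalgebra.lieSpan R _ {(C a * X ^ 2) • 𝔡, -𝔡} ≤ (moebiusDerivation R).range := by
  rw [LieSubalgebra.lieSpan_le]
  rintro _ (rfl | rfl) <;> rw [SetLike.mem_coe, LieHom.mem_range]
  · refine ⟨single 1 0 (by decide) (-a), ?_⟩
    rw [moebiusDerivation_apply]
    congr 1
    simp
  · refine ⟨single 0 1 (by decide) (-1), ?_⟩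
    rw [moebiusDerivation_apply, ← neg_one_smul R[X] 𝔡]
    congr 1
    simp

end CommRing

section Field

variable {K : Type*} [Field K]

local notation "𝔡" => (derivative' : Derivation K K[X] K[X])

theorem quadratic_derivative'_relations (α β : K) {A₀ A₁ : Derivation K K[X] K[X]}
    (h₀ : A₀ = (C (-(2 * α)) * X ^ 2 : K[X]) • 𝔡) (h₁ : A₁ = -𝔡) :
    ⁅A₁, ⁅A₁, ⁅A₀, A₁⁆⁆⁆ = 0 ∧
    (4 * α) • ⁅A₀, A₁⁆ + ⁅A₀, ⁅A₁, ⁅A₀, A₁⁆⁆⁆ = 0 ∧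
    ⁅A₁, ⁅A₁, ⁅A₀, ⁅A₀, ⁅A₀, A₁⁆⁆⁆⁆⁆ = 0 ∧
    ⁅A₁, ⁅A₀, ⁅A₀, ⁅A₀, ⁅A₀, A₁⁆⁆⁆⁆⁆ - β • ⁅A₀, ⁅A₀, ⁅A₀, A₁⁆⁆⁆
      + ((1 : K) / 2) • ⁅A₀, ⁅A₁, ⁅A₀, ⁅A₀, ⁅A₀, A₁⁆⁆⁆⁆⁆ = 0 ∧
    ⁅A₁, (0 : Derivation K K[X] K[X])⁆ + ⁅A₀, ⁅A₀, ⁅A₀, ⁅A₀, ⁅A₀, A₁⁆⁆⁆⁆⁆ = 0 ∧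
    ⁅A₀, (0 : Derivation K K[X] K[X])⁆ = 0 := by
  have hA₁ : A₁ = (-1 : K[X]) • 𝔡 := h₁.trans (neg_one_smul _ _).symm
  have h01 : ⁅A₀, A₁⁆ = (C (-(4 * α)) * X) • 𝔡 := by
    rw [h₀, hA₁, lie_smul_derivative']; congr 1; simp [C_ofNat]; ring
  have h101 : ⁅A₁, (C (-(4 * α)) * X) • 𝔡⁆ = C (4 * α) • 𝔡 := by
    rw [hA₁, lie_smul_derivative']; congr 1; simp
  have h001 : ⁅A₀, (C (-(4 * α)) * X) • 𝔡⁆ = (C (-(8 * α ^ 2)) * X ^ 2) • 𝔡 := by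
    rw [h₀, lie_smul_derivative']; congr 1; simp [C_ofNat]; ring
  have h0001 : ⁅A₀, (C (-(8 * α ^ 2)) * X ^ 2) • 𝔡⁆ = 0 := by
    rw [h₀, lie_smul_derivative', ← zero_smul K[X] 𝔡]; congr 1; simp [C_ofNat, derivative_pow]; ring
  simp only [h01, h101, h001, h0001]
  -- Generic Lie-algebra rewriting lemmas do not fire on `Derivation` (its bracket and `Sub` are not
  -- reducibly the generic ones), so the remaining combinations are compared at `X`.
  refine ⟨?_, ?_, ?_, ?_, ?_, ?_⟩ <;> apply derivation_ext <;>
    simp [Derivation.commutator_apply, h₀, h₁, C_ofNat, smul_eq_C_mul]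
  ring

theorem span_derivative'_le_lieSpan [NeZero (2 : K)] {a : K} (ha : a ≠ 0) :
    Submodule.span K {𝔡, (X : K[X]) • 𝔡, (X ^ 2 : K[X]) • 𝔡} ≤
      (LieSubalgebra.lieSpan K _ {(C a * X ^ 2) • 𝔡, -𝔡}).toSubmodule := by
  set N := LieSubalgebra.lieSpan K _ {(C a * X ^ 2) • 𝔡, -𝔡}
  have hv0 : 𝔡 ∈ N := by
    simpa using N.neg_mem (LieSubalgebra.subset_lieSpan (Set.mem_insert_of_mem _ rfl))
  have hv2 : (X ^ 2 : K[X]) • 𝔡 ∈ N := by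
    have h : a⁻¹ • (C a * X ^ 2) • 𝔡 = (X ^ 2 : K[X]) • 𝔡 := by
      rw [smul_smul_derivative', ← mul_assoc, ← C_mul, inv_mul_cancel₀ ha, C_1, one_mul]
    exact h ▸ N.smul_mem _ (LieSubalgebra.subset_lieSpan (by simp))
  have hv1 : (X : K[X]) • 𝔡 ∈ N := by
    have h : (2⁻¹ : K) • ⁅𝔡, (X ^ 2 : K[X]) • 𝔡⁆ = (X : K[X]) • 𝔡 := by
      rw [lie_derivative'_smul, smul_smul_derivative', derivative_X_sq, ← mul_assoc, ← C_mul,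
        inv_mul_cancel₀ two_ne_zero, C_1, one_mul]
    exact h ▸ N.smul_mem _ (N.lie_mem hv0 hv2)
  rw [Submodule.span_le]
  rintro _ (rfl | rfl | rfl)
  exacts [hv0, hv1, hv2]

end Field

end Polynomial

open Polynomial

/-- In the Lie algebra of `K`-linear derivations of `K[w]`, the elements
`A₀ = −2αw²(d/dw)`, `A₁ = −(d/dw)`, `Y = 0` satisfy relations (R1)–(R6); moreover, for
`α ≠ 0`, the Lie subalgebra generated by `A₀` and `A₁` is the 3-dimensional span of
`d/dw, w(d/dw), w²(d/dw)`, which is isomorphic to `sl₂(K)`. -/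
theorem stmt_19 {K : Type*} [Field K] [CharZero K] (α β : K) :
    ∀ D A₀ A₁ Y : Derivation K K[X] K[X],
    D = Polynomial.derivative' →
    A₀ = (C (-(2 * α)) * X ^ 2 : K[X]) • D →
    A₁ = -D →
    Y = 0 →
    (⁅A₁, ⁅A₁, ⁅A₀, A₁⁆⁆⁆ = 0 ∧
     (4 * α) • ⁅A₀, A₁⁆ + ⁅A₀, ⁅A₁, ⁅A₀, A₁⁆⁆⁆ = 0 ∧
     ⁅A₁, ⁅A₁, ⁅A₀, ⁅A₀, ⁅A₀, A₁⁆⁆⁆⁆⁆ = 0 ∧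
     ⁅A₁, ⁅A₀, ⁅A₀, ⁅A₀, ⁅A₀, A₁⁆⁆⁆⁆⁆ - β • ⁅A₀, ⁅A₀, ⁅A₀, A₁⁆⁆⁆
       + ((1 : K) / 2) • ⁅A₀, ⁅A₁, ⁅A₀, ⁅A₀, ⁅A₀, A₁⁆⁆⁆⁆⁆ = 0 ∧
     ⁅A₁, Y⁆ + ⁅A₀, ⁅A₀, ⁅A₀, ⁅A₀, ⁅A₀, A₁⁆⁆⁆⁆⁆ = 0 ∧
     ⁅A₀, Y⁆ = 0) ∧
    (α ≠ 0 →
      (LieSubalgebra.lieSpan K (Derivation K K[X] K[X]) {A₀, A₁}).toSubmodule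
        = Submodule.span K {D, (X : K[X]) • D, (X ^ 2 : K[X]) • D} ∧
      Nonempty
        ((LieSubalgebra.lieSpan K (Derivation K K[X] K[X]) {A₀, A₁}) ≃ₗ⁅K⁆
          (LieAlgebra.SpecialLinear.sl (Fin 2) K))) := by
  rintro D A₀ A₁ Y rfl h₀ h₁ rfl
  refine ⟨quadratic_derivative'_relations α β h₀ h₁, fun hα ↦ ?_⟩
  subst h₀ h₁
  have hle := lieSpan_le_range_moebiusDerivation (-(2 * α))
  have hrange := range_moebiusDerivation_le_span (R := K)
  have hspan := span_derivative'_le_lieSpan (a := -(2 * α)) (by simpa using hα)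
  have hN : LieSubalgebra.lieSpan K _ {(C (-(2 * α)) * X ^ 2 : K[X]) • derivative', -derivative'}
      = (moebiusDerivation K).range :=
    le_antisymm hle fun x hx ↦ hspan (hrange hx)
  refine ⟨le_antisymm (((LieSubalgebra.toSubmodule_le_toSubmodule _ _).mpr hle).trans hrange)
    hspan, ?_⟩
  rw [hN]
  exact ⟨(LieEquiv.ofInjective _ moebiusDerivation_injective).symm⟩
end
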